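/- arXiv:1910.02335 — 9 statements merged into one kernel-verified Lean document; each statement's English description precedes it below -/
import Mathlib

section
/- Let ⪯ be a well-founded, infinite branching tree order on ℕ. Let (μ_j)_{j∈ℕ} be a sequence of finitely supported positive measures on ℕ with pairwise disjoint supports, and let c > 0 be such that μ_j(ℕ) < c for all j ∈ ℕ. Then for every ε > 0 there exist an infinite set L ⊆ ℕ and, for each j ∈ L, a subset G_j of supp μ_j such that: (i) μ_j(ℕ ∖ G_j) ≤ ε for every j ∈ L; and (ii) for all j ≠ j' in L, every element of G_j is ⪯-incomparable with every element of G_{j'} (neither s ⪯ t nor t ⪯ s). -/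
/-- A tree order on ℕ: a partial order compatible with the usual order, in which every
node has a finite, totally ordered set of predecessors. -/
structure TreeOrder where
  le : ℕ → ℕ → Prop
  le_refl : ∀ n, le n n
  le_antisymm : ∀ {m n}, le m n → le n m → m = n
  le_trans : ∀ {a b c}, le a b → le b c → le a c
  compat : ∀ {m n}, le m n → m ≤ n
  pred_finite : ∀ n, {m | le m n}.Finite
  pred_chain : ∀ n, ∀ a, le a n → ∀ b, le b n → le a b ∨ le b a

/-- The tree is well-founded: there is no infinite ⪯-chain. -/
def TreeOrder.IsWellFoundedTree (T : TreeOrder) : Prop :=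
  ¬ ∃ c : ℕ → ℕ, StrictMono c ∧ ∀ i, T.le (c i) (c (i + 1))

/-- `s` is an immediate successor of `t`. -/
def TreeOrder.ImmSucc (T : TreeOrder) (t s : ℕ) : Prop :=
  T.le t s ∧ t ≠ s ∧ ∀ u, T.le t u → T.le u s → u = t ∨ u = s

/-- The tree is infinite branching: every non-maximal node has infinitely many
immediate successors. -/
def TreeOrder.InfiniteBranching (T : TreeOrder) : Prop :=
  ∀ t, (∃ s, T.le t s ∧ t ≠ s) → {s | T.ImmSucc t s}.Infinite

/-- Two nodes are incomparable. -/
def TreeOrder.Incomp (T : TreeOrder) (s t : ℕ) : Prop :=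
  ¬ T.le s t ∧ ¬ T.le t s

/-- The measure of a set `A` under a (finitely supported, positive) density `μ : ℕ → ℝ`. -/
noncomputable def mset (μ : ℕ → ℝ) (A : Set ℕ) : ℝ :=
  ∑' t, A.indicator μ t

/-!
Call a sequence of measures bad on `A` if there are `δ > 0` and sets `F i ⊆ A ∩ supp ν i` such
that every later measure keeps mass at least `δ` above each earlier `F i`. A bad sequence on `A`
yields, after passing to a subsequence, a bad sequence strictly above some node `u ∈ A`: take a
maximal family of pairwise incomparable finite subsets of `A` each keeping mass `δ / 2` above it
along an infinite set of indices (there are at most `2c / δ` of them, their cones being disjoint).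
By maximality, for almost every `j` the later measures keep `δ / 2` above the part of `F j` lying
above the union `U` of the family, and a pigeonhole over `u ∈ U` and over indices gives the bad
sequence in the cone of `u`. Iterating contradicts well-foundedness, so no bad sequence exists.

Hence every infinite set of indices contains `j` such that infinitely many of its other members put
mass at most `δ` above `supp μ j`. Iterating with `δ = ε / 2 ^ (k + 1)` gives indices `n k`, and
`G (n k)` is `supp μ (n k)` minus the cones over the earlier supports `supp μ (n i)`, `i < k`.
-/

open Function Set

section Mass

variable {μ : ℕ → ℝ}

theorem mset_inter_support (A : Set ℕ) : mset μ (A ∩ support μ) = mset μ A := by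
  rw [mset, indicator_inter_support, mset]

theorem mset_empty : mset μ ∅ = 0 := by
  simp [mset]

variable (hf : (support μ).Finite)
include hf

theorem mset_eq_sum (A : Set ℕ) : mset μ A = ∑ t ∈ hf.toFinset, A.indicator μ t :=
  tsum_eq_sum fun t ht => by simp_all

theorem sum_mset_eq_mset_biUnion {ι : Type*} (s : Finset ι) (A : ι → Set ℕ)
    (hA : (s : Set ι).PairwiseDisjoint A) :
    ∑ i ∈ s, mset μ (A i) = mset μ (⋃ i ∈ s, A i) := by
  simp only [mset_eq_sum hf, Finset.indicator_biUnion_apply s A hA]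
  exact Finset.sum_comm

variable (hμ : 0 ≤ μ)
include hμ

theorem mset_mono {A B : Set ℕ} (h : A ⊆ B) : mset μ A ≤ mset μ B := by
  rw [mset_eq_sum hf, mset_eq_sum hf]
  exact Finset.sum_le_sum fun t _ => indicator_le_indicator_of_subset h hμ t

theorem mset_le_add_of_subset_union {A B C : Set ℕ} (h : A ⊆ B ∪ C) :
    mset μ A ≤ mset μ B + mset μ C := by
  refine (mset_mono hf hμ h).trans ?_
  rw [mset_eq_sum hf, mset_eq_sum hf, mset_eq_sum hf, ← Finset.sum_add_distrib]
  refine Finset.sum_le_sum fun t _ => ?_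
  rw [← indicator_union_add_inter_apply]
  exact le_add_of_nonneg_right (indicator_nonneg (fun s _ => hμ s) t)

theorem mset_biUnion_le {ι : Type*} (s : Finset ι) (A : ι → Set ℕ) :
    mset μ (⋃ i ∈ s, A i) ≤ ∑ i ∈ s, mset μ (A i) := by
  classical
  induction s using Finset.induction with
  | empty => simp [mset_empty]
  | insert i s hi ih =>
    rw [Finset.sum_insert hi]
    refine (mset_le_add_of_subset_union hf hμ ?_).trans (add_le_add_right ih _)
    rw [Finset.set_biUnion_insert]

theorem exists_div_card_le_mset_of_le_mset_biUnion {ι : Type*} (s : Finset ι) (A : ι → Set ℕ)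
    {a : ℝ} (ha : 0 < a) (h : a ≤ mset μ (⋃ i ∈ s, A i)) :
    ∃ i ∈ s, a / s.card ≤ mset μ (A i) := by
  have hs : s.Nonempty := by
    by_contra hs
    rw [Finset.not_nonempty_iff_eq_empty.1 hs] at h
    simp only [Finset.notMem_empty, iUnion_of_empty, iUnion_empty, mset_empty] at h
    linarith
  refine Finset.exists_le_of_sum_le hs ?_
  rw [Finset.sum_const, nsmul_eq_mul, mul_div_cancel₀ _ (by exact_mod_cast hs.card_pos.ne')]
  exact h.trans (mset_biUnion_le hf hμ s A)

theorem mset_compl_support_sdiff_le (B : Set ℕ) : mset μ (support μ \ B)ᶜ ≤ mset μ B := by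
  rw [← mset_inter_support]
  exact mset_mono hf hμ fun x hx => not_not.1 fun hxB => hx.1 ⟨hx.2, hxB⟩

end Mass

theorem TreeOrder.Incomp.symm {T : TreeOrder} {s t : ℕ} (h : T.Incomp s t) : T.Incomp t s :=
  ⟨h.2, h.1⟩

namespace TreeOrder

variable (T : TreeOrder)

def upper (S : Set ℕ) : Set ℕ := {x | ∃ t ∈ S, T.le t x}

def lower (S : Set ℕ) : Set ℕ := {x | ∃ t ∈ S, T.le x t}

def strictUpper (u : ℕ) : Set ℕ := {x | T.le u x ∧ x ≠ u}

def IncompSets (S S' : Set ℕ) : Prop := ∀ s ∈ S, ∀ t ∈ S', T.Incomp s t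

variable {T}

theorem upper_empty : T.upper ∅ = ∅ := by
  simp [upper]

theorem mem_upper_singleton {u x : ℕ} : x ∈ T.upper {u} ↔ T.le u x := by
  simp [upper]

theorem lower_finite {S : Set ℕ} (hS : S.Finite) : (T.lower S).Finite :=
  (hS.biUnion fun t _ => T.pred_finite t).subset fun _ ⟨_, ht, hxt⟩ => mem_biUnion ht hxt

instance : Std.Symm T.IncompSets :=
  ⟨fun _ _ h s hs t ht => (h t ht s hs).symm⟩

theorem IncompSets.irrefl {S : Set ℕ} (h : T.IncompSets S S) : S = ∅ :=
  eq_empty_of_forall_notMem fun s hs => (h s hs s hs).1 (T.le_refl s)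

theorem disjoint_upper {S S' : Set ℕ} (h : T.IncompSets S S') :
    Disjoint (T.upper S) (T.upper S') := by
  rw [Set.disjoint_left]
  rintro x ⟨s, hs, hsx⟩ ⟨t, ht, htx⟩
  rcases T.pred_chain x s hsx t htx with hst | hts
  exacts [(h s hs t ht).1 hst, (h s hs t ht).2 hts]

theorem IsWellFoundedTree.wellFounded (hwf : T.IsWellFoundedTree) :
    WellFounded fun a b => a ∈ T.strictUpper b := by
  rw [wellFounded_iff_isEmpty_descending_chain]
  refine ⟨fun ⟨f, hf⟩ => hwf ⟨f, strictMono_nat_of_lt_succ fun n => ?_, fun n => (hf n).1⟩⟩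
  exact (T.compat (hf n).1).lt_of_ne (hf n).2.symm

end TreeOrder

theorem exists_infinite_inter_of_subset_biUnion {α ι : Type*} {C : Set α} (hC : C.Infinite)
    {U : Set ι} (hU : U.Finite) {D : ι → Set α} (h : C ⊆ ⋃ u ∈ U, D u) :
    ∃ u ∈ U, (C ∩ D u).Infinite := by
  by_contra! hfin
  refine hC ((hU.biUnion hfin).subset fun x hx => ?_)
  obtain ⟨u, hu, hxu⟩ := mem_iUnion₂.1 (h hx)
  exact mem_biUnion hu ⟨hx, hxu⟩

theorem finite_setOf_inter_nonempty {α ι : Type*} {F : ι → Set α} (hF : Pairwise (Disjoint on F))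
    {S : Set α} (hS : S.Finite) : {j | (F j ∩ S).Nonempty}.Finite := by
  refine (hS.biUnion fun s _ => Set.Subsingleton.finite (s := {j | s ∈ F j}) ?_).subset ?_
  · intro j hj j' hj'
    by_contra hne
    exact (hF hne).notMem_of_mem_left hj hj'
  · rintro j ⟨s, hsj, hs⟩
    exact mem_biUnion hs hsj

/-- Diagonal extraction: repeatedly pick a pivot `n k` and pass to an infinite set of later
indices. -/
theorem exists_injective_diagonal {α : Type*} {M : Set ℕ} (hM : M.Infinite)
    {P : ℕ → ℕ → α → ℕ → Prop}
    (h : ∀ k, ∀ N ⊆ M, N.Infinite →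
      ∃ j ∈ N, ∃ a, ∃ N' ⊆ N, N'.Infinite ∧ j ∉ N' ∧ ∀ m ∈ N', P k j a m) :
    ∃ n : ℕ → ℕ, Injective n ∧ ∃ a : ℕ → α, ∀ k k', k < k' → P k (n k) (a k) (n k') := by
  let Pool := {N : Set ℕ // N ⊆ M ∧ N.Infinite}
  have h' : ∀ k (N : Pool), ∃ j ∈ N.1, ∃ a, ∃ N' : Pool, N'.1 ⊆ N.1 ∧ j ∉ N'.1 ∧
      ∀ m ∈ N'.1, P k j a m := fun k N => by
    obtain ⟨j, hj, a, N', hN'N, hN'inf, hjN', hP⟩ := h k N.1 N.2.1 N.2.2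
    exact ⟨j, hj, a, ⟨N', hN'N.trans N.2.1, hN'inf⟩, hN'N, hjN', hP⟩
  choose j hj a N' hN'N hjN' hP using h'
  let S : ℕ → Pool := fun k => Nat.rec ⟨M, subset_rfl, hM⟩ (fun k N => N' k N) k
  have hanti : Antitone fun k => (S k).1 := antitone_nat_of_succ_le fun k => hN'N k (S k)
  have hlater : ∀ k k', k < k' → j k' (S k') ∈ (S (k + 1)).1 := fun k k' hk => hanti hk (hj k' _)
  refine ⟨fun k => j k (S k), Injective.of_lt_imp_ne fun k k' hk heq => ?_,
    fun k => a k (S k), fun k k' hk => hP k _ _ (hlater k k' hk)⟩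
  exact hjN' k _ (heq ▸ hlater k k' hk)

structure IsDisjointMassSeq (ν : ℕ → ℕ → ℝ) (c : ℝ) : Prop where
  nonneg : ∀ j, 0 ≤ ν j
  finite : ∀ j, (support (ν j)).Finite
  disjoint : Pairwise (Disjoint on fun j => support (ν j))
  mset_le : ∀ j, mset (ν j) univ ≤ c

theorem IsDisjointMassSeq.comp {ν : ℕ → ℕ → ℝ} {c : ℝ} (hν : IsDisjointMassSeq ν c)
    {σ : ℕ → ℕ} (hσ : Injective σ) : IsDisjointMassSeq (ν ∘ σ) c :=
  ⟨fun _ => hν.nonneg _, fun _ => hν.finite _, hν.disjoint.comp_of_injective hσ,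
    fun _ => hν.mset_le _⟩

def IsBadSeq (T : TreeOrder) (ν : ℕ → ℕ → ℝ) (A : Set ℕ) : Prop :=
  ∃ δ > 0, ∃ F : ℕ → Set ℕ, (∀ i, F i ⊆ A ∩ support (ν i)) ∧
    ∀ i m, i < m → δ ≤ mset (ν m) (T.upper (F i))

structure IsHeavyFamily (T : TreeOrder) (ν : ℕ → ℕ → ℝ) (A : Set ℕ) (η : ℝ) (𝒜 : Finset (Set ℕ))
    (M : Set ℕ) : Prop where
  infinite : M.Infinite
  finite : ∀ P ∈ 𝒜, P.Finite
  subset : ∀ P ∈ 𝒜, P ⊆ A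
  pairwise : (𝒜 : Set (Set ℕ)).Pairwise T.IncompSets
  le_mset : ∀ m ∈ M, ∀ P ∈ 𝒜, η ≤ mset (ν m) (T.upper P)

section HeavyFamily

variable {T : TreeOrder} {ν : ℕ → ℕ → ℝ} {c : ℝ} {A : Set ℕ} {η : ℝ}

theorem IsHeavyFamily.card_mul_le (hν : IsDisjointMassSeq ν c) {𝒜 : Finset (Set ℕ)} {M : Set ℕ}
    (h : IsHeavyFamily T ν A η 𝒜 M) : 𝒜.card * η ≤ c := by
  obtain ⟨m, hm⟩ := h.infinite.nonempty
  have hdisj : (𝒜 : Set (Set ℕ)).PairwiseDisjoint T.upper :=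
    h.pairwise.mono' fun _ _ => TreeOrder.disjoint_upper
  calc 𝒜.card * η = ∑ P ∈ 𝒜, η := by rw [Finset.sum_const, nsmul_eq_mul]
    _ ≤ ∑ P ∈ 𝒜, mset (ν m) (T.upper P) := Finset.sum_le_sum fun P hP => h.le_mset m hm P hP
    _ = mset (ν m) (⋃ P ∈ 𝒜, T.upper P) := sum_mset_eq_mset_biUnion (hν.finite m) 𝒜 _ hdisj
    _ ≤ mset (ν m) univ := mset_mono (hν.finite m) (hν.nonneg m) (subset_univ _)
    _ ≤ c := hν.mset_le m

theorem IsHeavyFamily.insert {𝒜 : Finset (Set ℕ)} {M : Set ℕ} (h : IsHeavyFamily T ν A η 𝒜 M)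
    {Q : Set ℕ} (hQfin : Q.Finite) (hQA : Q ⊆ A) (hQ : ∀ P ∈ 𝒜, T.IncompSets Q P)
    {M' : Set ℕ} (hM'M : M' ⊆ M) (hM' : M'.Infinite)
    (hQm : ∀ m ∈ M', η ≤ mset (ν m) (T.upper Q)) :
    IsHeavyFamily T ν A η (insert Q 𝒜) M' := by
  classical
  refine ⟨hM', ?_, ?_, ?_, ?_⟩
  · simpa [hQfin] using h.finite
  · simpa [hQA] using h.subset
  · rw [Finset.coe_insert, pairwise_insert_of_symm]
    exact ⟨h.pairwise, fun P hP _ => hQ P hP⟩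
  · intro m hm
    simpa [hQm m hm] using h.le_mset m (hM'M hm)

theorem exists_maximal_heavyFamily (hν : IsDisjointMassSeq ν c) (hη : 0 < η) :
    ∃ 𝒜 M, IsHeavyFamily T ν A η 𝒜 M ∧
      ∀ 𝒜' M', IsHeavyFamily T ν A η 𝒜' M' → 𝒜'.card ≤ 𝒜.card := by
  classical
  let p : ℕ → Prop := fun r => ∃ 𝒜 M, IsHeavyFamily T ν A η 𝒜 M ∧ 𝒜.card = r
  have hbound : ∀ 𝒜 M, IsHeavyFamily T ν A η 𝒜 M → 𝒜.card ≤ ⌈c / η⌉₊ := fun 𝒜 M h => by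
    have : (𝒜.card : ℝ) ≤ c / η := (le_div_iff₀ hη).2 (h.card_mul_le hν)
    exact_mod_cast this.trans (Nat.le_ceil _)
  have hp0 : p 0 := ⟨∅, univ, ⟨infinite_univ, by simp, by simp, by simp, by simp⟩, rfl⟩
  obtain ⟨𝒜, M, h, hcard⟩ := Nat.findGreatest_spec (Nat.zero_le _) hp0
  exact ⟨𝒜, M, h, fun 𝒜' M' h' =>
    hcard ▸ Nat.le_findGreatest (hbound 𝒜' M' h') ⟨𝒜', M', h', rfl⟩⟩

end HeavyFamily

section Descent

variable {T : TreeOrder} {ν : ℕ → ℕ → ℝ} {c : ℝ} {A : Set ℕ}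

theorem IsHeavyFamily.finite_setOf_le_mset_of_maximal {η : ℝ} {𝒜 : Finset (Set ℕ)} {M : Set ℕ}
    (h : IsHeavyFamily T ν A η 𝒜 M)
    (hmax : ∀ 𝒜' M', IsHeavyFamily T ν A η 𝒜' M' → 𝒜'.card ≤ 𝒜.card) (hη : 0 < η)
    {Q : Set ℕ} (hQfin : Q.Finite) (hQA : Q ⊆ A) (hQ : ∀ P ∈ 𝒜, T.IncompSets Q P) :
    {m ∈ M | η ≤ mset (ν m) (T.upper Q)}.Finite := by
  classical
  by_contra hinf
  have hQne : Q ≠ ∅ := by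
    rintro rfl
    obtain ⟨m, -, hm⟩ := (Set.not_finite.1 hinf).nonempty
    rw [TreeOrder.upper_empty, mset_empty] at hm
    linarith
  have hQ𝒜 : Q ∉ 𝒜 := fun hQ𝒜 => hQne (hQ Q hQ𝒜).irrefl
  have := hmax _ _ (h.insert hQfin hQA hQ (fun _ hm => hm.1) hinf fun _ hm => hm.2)
  rw [Finset.card_insert_of_notMem hQ𝒜] at this
  omega

theorem exists_div_card_le_mset_upper_inter {μ : ℕ → ℝ} (hf : (support μ).Finite) (hμ : 0 ≤ μ)
    {S U : Set ℕ} (hU : U.Finite) {a : ℝ} (ha : 0 < a) (hS : a ≤ mset μ (T.upper S))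
    (hout : mset μ (T.upper (S \ T.upper U)) < a / 2) :
    ∃ u ∈ U, a / 2 / hU.toFinset.card ≤ mset μ (T.upper (S ∩ T.upper {u})) := by
  have hcover : T.upper S ⊆
      T.upper (S \ T.upper U) ∪ ⋃ u ∈ hU.toFinset, T.upper (S ∩ T.upper {u}) := by
    rintro x ⟨s, hs, hsx⟩
    by_cases hsU : s ∈ T.upper U
    · obtain ⟨u, hu, hus⟩ := hsU
      exact Or.inr (mem_biUnion (hU.mem_toFinset.2 hu)
        ⟨s, ⟨hs, TreeOrder.mem_upper_singleton.2 hus⟩, hsx⟩)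
    · exact Or.inl ⟨s, ⟨hs, hsU⟩, hsx⟩
  have hin := hS.trans (mset_le_add_of_subset_union hf hμ hcover)
  obtain ⟨u, hu, hmass⟩ :=
    exists_div_card_le_mset_of_le_mset_biUnion hf hμ hU.toFinset
      (fun u => T.upper (S ∩ T.upper {u})) (half_pos ha) (by linarith)
  exact ⟨u, hU.mem_toFinset.1 hu, hmass⟩

theorem exists_isBadSeq_strictUpper (hν : IsDisjointMassSeq ν c) {F : ℕ → Set ℕ}
    (hF : ∀ i, F i ⊆ support (ν i)) {U : Set ℕ} (hU : U.Finite) {δ : ℝ} (hδ : 0 < δ)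
    {J : ℕ → ℕ} (hJ : Injective J) {a : ℕ → ℕ}
    (h : ∀ k k', k < k' → a k ∈ U ∧ δ ≤ mset (ν (J k')) (T.upper (F (J k) ∩ T.upper {a k}))) :
    ∃ w ∈ U, ∃ σ : ℕ → ℕ, Injective σ ∧ IsBadSeq T (ν ∘ σ) (T.strictUpper w) := by
  obtain ⟨w, hw, hcol⟩ := exists_infinite_inter_of_subset_biUnion infinite_univ hU
    (D := fun w => {k | a k = w}) fun k _ => mem_biUnion (h k (k + 1) k.lt_succ_self).1 rfl
  have hsing : {k | w ∈ F (J k)}.Subsingleton := fun k hk k' hk' => by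
    by_contra hne
    exact (hν.disjoint (hJ.ne hne)).notMem_of_mem_left (hF _ hk) (hF _ hk')
  -- `w` lies in at most one `F (J k)`; dropping that index keeps the cones strict
  set Λ : Set ℕ := (univ ∩ {k | a k = w}) \ {k | w ∈ F (J k)}
  have hΛ : Λ.Infinite := hcol.sdiff hsing.finite
  have hlam : ∀ i, Nat.nth (· ∈ Λ) i ∈ Λ := Nat.nth_mem_of_infinite hΛ
  have hmono : StrictMono (Nat.nth (· ∈ Λ)) := Nat.nth_strictMono hΛ
  refine ⟨w, hw, J ∘ Nat.nth (· ∈ Λ), hJ.comp hmono.injective, δ, hδ,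
    fun i => F (J (Nat.nth (· ∈ Λ) i)) ∩ T.upper {w}, fun i x hx => ?_, fun i m him => ?_⟩
  · refine ⟨⟨TreeOrder.mem_upper_singleton.1 hx.2, ?_⟩, hF _ hx.1⟩
    rintro rfl
    exact (hlam i).2 hx.1
  · have hai : a (Nat.nth (· ∈ Λ) i) = w := (hlam i).1.2
    simpa only [comp_apply, hai] using (h _ _ (hmono him)).2

theorem IsBadSeq.exists_strictUpper (hν : IsDisjointMassSeq ν c) (hbad : IsBadSeq T ν A) :
    ∃ u ∈ A, ∃ σ : ℕ → ℕ, Injective σ ∧ IsBadSeq T (ν ∘ σ) (T.strictUpper u) := by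
  obtain ⟨δ, hδ, F, hF, hFδ⟩ := hbad
  obtain ⟨𝒜, M, hfam, hmax⟩ := exists_maximal_heavyFamily (T := T) (A := A) hν (half_pos hδ)
  set U := ⋃₀ (𝒜 : Set (Set ℕ))
  have hU : U.Finite := 𝒜.finite_toSet.sUnion hfam.finite
  have hFsupp : ∀ i, F i ⊆ support (ν i) := fun i => (hF i).trans inter_subset_right
  have hFdisj : Pairwise (Disjoint on F) := fun i l hil =>
    (hν.disjoint hil).mono (hFsupp i) (hFsupp l)
  have hM₀ : (M \ {j | (F j ∩ T.lower U).Nonempty}).Infinite :=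
    hfam.infinite.sdiff (finite_setOf_inter_nonempty hFdisj (TreeOrder.lower_finite hU))
  have hext : ∀ k : ℕ, ∀ N ⊆ M \ {j | (F j ∩ T.lower U).Nonempty}, N.Infinite →
      ∃ j ∈ N, ∃ u, ∃ N' ⊆ N, N'.Infinite ∧ j ∉ N' ∧ ∀ m ∈ N', u ∈ U ∧
        δ / 2 / hU.toFinset.card ≤ mset (ν m) (T.upper (F j ∩ T.upper {u})) := by
    intro _ N hN hNinf
    obtain ⟨j, hj⟩ := hNinf.nonempty
    have hQ : T.IncompSets (F j \ T.upper U) U := fun s hs t ht =>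
      ⟨fun hst => (hN hj).2 ⟨s, hs.1, t, ht, hst⟩, fun hts => hs.2 ⟨t, ht, hts⟩⟩
    have hE := hfam.finite_setOf_le_mset_of_maximal hmax (half_pos hδ)
      ((hν.finite j).subset (sdiff_subset.trans (hFsupp j)))
      (sdiff_subset.trans ((hF j).trans inter_subset_left))
      fun P hP s hs t ht => hQ s hs t (subset_sUnion_of_mem hP ht)
    have hC : ((N \ Iic j) \ {m ∈ M | δ / 2 ≤ mset (ν m) (T.upper (F j \ T.upper U))}).Infinite :=
      (hNinf.sdiff (finite_Iic j)).sdiff hE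
    obtain ⟨u, hu, hCu⟩ := exists_infinite_inter_of_subset_biUnion hC hU fun m hm => by
      obtain ⟨u, hu, hmass⟩ := exists_div_card_le_mset_upper_inter (hν.finite m) (hν.nonneg m) hU
        hδ (hFδ j m (not_le.1 hm.1.2)) (not_le.1 fun hle => hm.2 ⟨(hN hm.1.1).1, hle⟩)
      exact mem_biUnion hu hmass
    exact ⟨j, hj, u, _, fun m hm => hm.1.1.1, hCu, fun hjC => hjC.1.1.2 (mem_Iic.2 le_rfl),
      fun m hm => ⟨hu, hm.2⟩⟩
  obtain ⟨J, hJ, a, hJa⟩ := exists_injective_diagonal hM₀ hext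
  have hcard : (0 : ℝ) < hU.toFinset.card :=
    Nat.cast_pos.2 (Finset.card_pos.2 ⟨a 0, hU.mem_toFinset.2 (hJa 0 1 one_pos).1⟩)
  obtain ⟨w, hw, hbad⟩ :=
    exists_isBadSeq_strictUpper hν hFsupp hU (div_pos (half_pos hδ) hcard) hJ hJa
  exact ⟨w, sUnion_subset hfam.subset hw, hbad⟩

end Descent

section WellFounded

variable {T : TreeOrder} (hwf : T.IsWellFoundedTree) {ν : ℕ → ℕ → ℝ} {c : ℝ}
include hwf

theorem not_isBadSeq (hν : IsDisjointMassSeq ν c) {A : Set ℕ} : ¬ IsBadSeq T ν A := by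
  intro hbad
  obtain ⟨u, -, σ, hσ, hbad'⟩ := hbad.exists_strictUpper hν
  suffices ∀ u ν, IsDisjointMassSeq ν c → ¬ IsBadSeq T ν (T.strictUpper u) from
    this u _ (hν.comp hσ) hbad'
  intro u
  induction u using hwf.wellFounded.induction with
  | _ u ih =>
    intro ν hν hbad
    obtain ⟨u', hu', σ, hσ, hbad'⟩ := hbad.exists_strictUpper hν
    exact ih u' hu' _ (hν.comp hσ) hbad'

theorem exists_mset_upper_support_le (hν : IsDisjointMassSeq ν c) {M : Set ℕ}
    (hM : M.Infinite) {δ : ℝ} (hδ : 0 < δ) :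
    ∃ j ∈ M, ∃ M' ⊆ M, M'.Infinite ∧ j ∉ M' ∧
      ∀ m ∈ M', mset (ν m) (T.upper (support (ν j))) ≤ δ := by
  by_contra! h
  have hfin : ∀ j ∈ M, {m ∈ M | mset (ν m) (T.upper (support (ν j))) ≤ δ}.Finite := by
    intro j hj
    refine Set.not_infinite.1 fun hinf => ?_
    obtain ⟨m, hm, hlt⟩ := h j hj _ (sdiff_subset.trans (sep_subset _ _))
      (hinf.sdiff (finite_singleton j)) fun hj' => hj'.2 rfl
    exact hlt.not_ge hm.1.2
  obtain ⟨J, hJ, -, hJδ⟩ := exists_injective_diagonal (α := Unit) hM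
    (P := fun _ j _ m => δ < mset (ν m) (T.upper (support (ν j)))) fun _ N hN hNinf => by
      obtain ⟨j, hj⟩ := hNinf.nonempty
      exact ⟨j, hj, (), _, sdiff_subset, hNinf.sdiff ((hfin j (hN hj)).insert j),
        fun hj' => hj'.2 (mem_insert j _),
        fun m hm => not_le.1 fun hle => hm.2 (Or.inr ⟨hN hm.1, hle⟩)⟩
  exact not_isBadSeq hwf (hν.comp hJ) ⟨δ, hδ, fun k => support (ν (J k)),
    fun k => subset_inter (subset_univ _) subset_rfl, fun k k' hk => (hJδ k k' hk).le⟩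

theorem exists_injective_mset_upper_support_le (hν : IsDisjointMassSeq ν c) {ε : ℝ}
    (hε : 0 < ε) :
    ∃ n : ℕ → ℕ, Injective n ∧ ∀ k k', k < k' →
      mset (ν (n k')) (T.upper (support (ν (n k)))) ≤ ε / 2 * (1 / 2) ^ k ∧
        Disjoint (support (ν (n k'))) (T.lower (support (ν (n k)))) := by
  obtain ⟨n, hn, -, h⟩ := exists_injective_diagonal (α := Unit) infinite_univ
    (P := fun k j _ m => mset (ν m) (T.upper (support (ν j))) ≤ ε / 2 * (1 / 2) ^ k ∧
      Disjoint (support (ν m)) (T.lower (support (ν j)))) fun k N _ hN => by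
    obtain ⟨j, hj, M', hM'N, hM', hjM', hlight⟩ :=
      exists_mset_upper_support_le hwf hν hN (δ := ε / 2 * (1 / 2) ^ k) (by positivity)
    have hmeet :=
      finite_setOf_inter_nonempty hν.disjoint (TreeOrder.lower_finite (T := T) (hν.finite j))
    refine ⟨j, hj, (), _, sdiff_subset.trans hM'N, hM'.sdiff hmeet, fun hj' => hjM' hj'.1,
      fun m hm => ⟨hlight m hm.1, ?_⟩⟩
    exact disjoint_iff_inter_eq_empty.2 (not_nonempty_iff_eq_empty.1 hm.2)
  exact ⟨n, hn, h⟩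

end WellFounded

theorem sum_geometric_half_le (ε : ℝ) (hε : 0 ≤ ε) (k : ℕ) :
    ∑ i ∈ Finset.range k, ε / 2 * (1 / 2) ^ i ≤ ε := by
  rw [← Finset.mul_sum]
  nlinarith [sum_geometric_two_le k]

theorem statement0_general (T : TreeOrder) (hwf : T.IsWellFoundedTree)
    (μ : ℕ → ℕ → ℝ)
    (hnn : ∀ j t, 0 ≤ μ j t)
    (hfin : ∀ j, (Function.support (μ j)).Finite)
    (hdisj : ∀ j j', j ≠ j' → Disjoint (Function.support (μ j)) (Function.support (μ j')))
    (c : ℝ) (hbd : ∀ j, mset (μ j) Set.univ < c)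
    (ε : ℝ) (hε : 0 < ε) :
    ∃ L : Set ℕ, L.Infinite ∧ ∃ G : ℕ → Set ℕ,
      (∀ j ∈ L, G j ⊆ Function.support (μ j)) ∧
      (∀ j ∈ L, mset (μ j) (G j)ᶜ ≤ ε) ∧
      (∀ j ∈ L, ∀ j' ∈ L, j ≠ j' → ∀ s ∈ G j, ∀ t ∈ G j', T.Incomp s t) := by
  have hμ : IsDisjointMassSeq μ c :=
    ⟨fun j t => hnn j t, hfin, fun j j' h => hdisj j j' h, fun j => (hbd j).le⟩
  obtain ⟨n, hn, hlight⟩ := exists_injective_mset_upper_support_le hwf hμ hε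
  set B : ℕ → Set ℕ := fun k => ⋃ i ∈ Finset.range k, T.upper (support (μ (n i)))
  set G : ℕ → Set ℕ := fun j => support (μ j) \ B (invFun n j)
  have hG : ∀ k, G (n k) = support (μ (n k)) \ B k := fun k => by
    simp only [G, leftInverse_invFun hn k]
  have hincomp : ∀ k k', k < k' → T.IncompSets (G (n k)) (G (n k')) := by
    intro k k' hk s hs t ht
    rw [hG] at hs ht
    exact ⟨fun hst => ht.2 (mem_biUnion (Finset.mem_range.2 hk) ⟨s, hs.1, hst⟩),
      fun hts => (hlight k k' hk).2.notMem_of_mem_left ht.1 ⟨s, hs.1, hts⟩⟩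
  refine ⟨range n, infinite_range_of_injective hn, G, fun _ _ => sdiff_subset, ?_, ?_⟩
  · rintro _ ⟨k, rfl⟩
    rw [hG]
    calc mset (μ (n k)) (support (μ (n k)) \ B k)ᶜ ≤ mset (μ (n k)) (B k) :=
          mset_compl_support_sdiff_le (hfin _) (hnn _) _
      _ ≤ ∑ i ∈ Finset.range k, mset (μ (n k)) (T.upper (support (μ (n i)))) :=
          mset_biUnion_le (hfin _) (hnn _) _ _
      _ ≤ ∑ i ∈ Finset.range k, ε / 2 * (1 / 2) ^ i :=
          Finset.sum_le_sum fun i hi => (hlight i k (Finset.mem_range.1 hi)).1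
      _ ≤ ε := sum_geometric_half_le ε hε.le k
  · rintro _ ⟨k, rfl⟩ _ ⟨k', rfl⟩ hne s hs t ht
    rcases (ne_of_apply_ne n hne).lt_or_gt with hk | hk
    exacts [hincomp k k' hk s hs t ht, (hincomp k' k hk t ht s hs).symm]

/-- for a sequence of disjointly and finitely supported positive measures on a
well-founded infinite branching tree on ℕ, uniformly bounded by `c`, and every `ε > 0`, one
can pass to an infinite set `L` of indices and find sets `G j ⊆ supp μ j` carrying all but
`ε` of the mass of `μ j`, with the `G j`, `j ∈ L`, pairwise incomparable. -/
theorem statement0 (T : TreeOrder) (hwf : T.IsWellFoundedTree) (hib : T.InfiniteBranching)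
    (μ : ℕ → ℕ → ℝ)
    (hnn : ∀ j t, 0 ≤ μ j t)
    (hfin : ∀ j, (Function.support (μ j)).Finite)
    (hdisj : ∀ j j', j ≠ j' → Disjoint (Function.support (μ j)) (Function.support (μ j')))
    (c : ℝ) (hc : 0 < c) (hbd : ∀ j, mset (μ j) Set.univ < c)
    (ε : ℝ) (hε : 0 < ε) :
    ∃ L : Set ℕ, L.Infinite ∧ ∃ G : ℕ → Set ℕ,
      (∀ j ∈ L, G j ⊆ Function.support (μ j)) ∧
      (∀ j ∈ L, mset (μ j) (G j)ᶜ ≤ ε) ∧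
      (∀ j ∈ L, ∀ j' ∈ L, j ≠ j' → ∀ s ∈ G j, ∀ t ∈ G j', T.Incomp s t) :=
  statement0_general T hwf μ hnn hfin hdisj c hbd ε hε
end

section
/- Let ⪯ be a tree order on ℕ and for x ∈ c₀₀ define ‖x‖_{G₂} = sup{(Σ_{i∈S} x(i)²)^{1/2} : S a segment of ⪯}. If x_1, …, x_n ∈ c₀₀ have pairwise disjoint supports and ‖x_j‖_{G₂} ≤ 1 for every 1 ≤ j ≤ n, then for all real scalars a_1, …, a_n one has ‖Σ_{j=1}^n a_j x_j‖_{G₂} ≤ (Σ_{j=1}^n a_j²)^{1/2}. -/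
/-- A segment of the tree order: a totally ordered, convex subset. -/
def TreeOrder.Segment (T : TreeOrder) (S : Set ℕ) : Prop :=
  (∀ s ∈ S, ∀ u ∈ S, T.le s u ∨ T.le u s) ∧
  (∀ s ∈ S, ∀ u ∈ S, ∀ t, T.le s t → T.le t u → t ∈ S)

/-- if `x 1, …, x n ∈ c₀₀` have pairwise disjoint supports and
`‖x j‖_{G₂} ≤ 1` (i.e. `(Σ_{i∈S} x j i ²)^{1/2} ≤ 1` for every segment `S`), then for all
scalars `a j` and every segment `S`,
`(Σ_{i∈S} (Σ_j a j • x j) i ²)^{1/2} ≤ (Σ_j a j ²)^{1/2}`; that is,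
`‖Σ_j a j • x j‖_{G₂} ≤ (Σ_j a j ²)^{1/2}`. -/
theorem statement2 (T : TreeOrder) (n : ℕ) (x : Fin n → ℕ → ℝ)
    (hfin : ∀ j, (Function.support (x j)).Finite)
    (hdisj : ∀ j j', j ≠ j' →
      Disjoint (Function.support (x j)) (Function.support (x j')))
    (hbd : ∀ j, ∀ S : Set ℕ, T.Segment S →
      Real.sqrt (mset (fun i => (x j i) ^ 2) S) ≤ 1)
    (a : Fin n → ℝ) :
    ∀ S : Set ℕ, T.Segment S →
      Real.sqrt (mset (fun i => (∑ j, a j * x j i) ^ 2) S) ≤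
        Real.sqrt (∑ j, (a j) ^ 2) := by
  intro S hS
  -- summability of each indicator of squares
  have hsum : ∀ j : Fin n, Summable (S.indicator (fun i => (x j i) ^ 2)) := by
    intro j
    apply summable_of_finite_support
    apply (hfin j).subset
    intro i hi
    simp only [Function.mem_support, Set.indicator] at hi ⊢
    intro h
    apply hi
    split <;> simp [h]
  have hsum2 : ∀ j : Fin n, Summable (fun i => a j ^ 2 * S.indicator (fun i => (x j i) ^ 2) i) :=
    fun j => (hsum j).mul_left _
  -- nonnegativity and bound on each mset
  have hnn : ∀ j : Fin n, 0 ≤ mset (fun i => (x j i) ^ 2) S := by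
    intro j
    apply tsum_nonneg
    intro i
    exact Set.indicator_nonneg (fun i _ => sq_nonneg _) i
  have hle1 : ∀ j : Fin n, mset (fun i => (x j i) ^ 2) S ≤ 1 := by
    intro j
    have h := hbd j S hS
    nlinarith [Real.sq_sqrt (hnn j), Real.sqrt_nonneg (mset (fun i => (x j i) ^ 2) S)]
  -- pointwise identity using disjoint supports
  have hpt : ∀ i, S.indicator (fun i => (∑ j, a j * x j i) ^ 2) i
      = ∑ j, a j ^ 2 * S.indicator (fun i => (x j i) ^ 2) i := by
    intro i
    by_cases hi : i ∈ S
    · rw [Set.indicator_of_mem hi]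
      simp only [Set.indicator_of_mem hi]
      by_cases hex : ∃ j₀, x j₀ i ≠ 0
      · obtain ⟨j₀, hj₀⟩ := hex
        have h1 : ∑ j, a j * x j i = a j₀ * x j₀ i := by
          apply Finset.sum_eq_single
          · intro j _ hj
            have : x j i = 0 := by
              by_contra hne
              exact (hdisj j j₀ hj).le_bot ⟨hne, hj₀⟩
            simp [this]
          · simp
        have h2 : ∑ j, a j ^ 2 * x j i ^ 2 = a j₀ ^ 2 * x j₀ i ^ 2 := by
          apply Finset.sum_eq_single
          · intro j _ hj
            have : x j i = 0 := by
              by_contra hne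
              exact (hdisj j j₀ hj).le_bot ⟨hne, hj₀⟩
            simp [this]
          · simp
        rw [h1, h2]; ring
      · push_neg at hex
        simp [hex]
    · simp [Set.indicator_of_notMem hi]
  -- compute the mset of the combination
  have hkey : mset (fun i => (∑ j, a j * x j i) ^ 2) S
      = ∑ j, a j ^ 2 * mset (fun i => (x j i) ^ 2) S := by
    unfold mset
    rw [show (S.indicator fun i => (∑ j, a j * x j i) ^ 2)
        = fun i => ∑ j, a j ^ 2 * S.indicator (fun i => (x j i) ^ 2) i from funext hpt]
    rw [Summable.tsum_finsetSum (fun j _ => hsum2 j)]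
    exact Finset.sum_congr rfl fun j _ => tsum_mul_left
  have hfinal : mset (fun i => (∑ j, a j * x j i) ^ 2) S ≤ ∑ j, a j ^ 2 := by
    rw [hkey]
    calc ∑ j, a j ^ 2 * mset (fun i => (x j i) ^ 2) S
        ≤ ∑ j, a j ^ 2 * 1 := by
          apply Finset.sum_le_sum
          intro j _
          exact mul_le_mul_of_nonneg_left (hle1 j) (sq_nonneg _)
      _ = ∑ j, a j ^ 2 := by simp
  exact Real.sqrt_le_sqrt hfinal
end

section
/- Let G be a norming set. Then every f ∈ W_G admits a tree analysis. -/
open Function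

/-- The coordinate functional `e*_i`. -/
def estar (i : ℕ) : ℕ → ℝ := fun n => if n = i then 1 else 0

/-- A norming set: a symmetric set of finitely supported functionals containing all the
coordinate functionals, with `‖f‖_∞ ≤ 1`, closed under restriction to intervals of ℕ. -/
structure IsNormingSet (W : Set (ℕ → ℝ)) : Prop where
  finsupp : ∀ f ∈ W, (support f).Finite
  neg_mem : ∀ f ∈ W, (-f) ∈ W
  estar_mem : ∀ i : ℕ, estar i ∈ W
  sup_le_one : ∀ f ∈ W, ∀ n, |f n| ≤ 1
  restrict_mem : ∀ f ∈ W, ∀ I : Set ℕ, I.OrdConnected →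
    I.indicator f ∈ W

/-- The Tsirelson extension `W_G` of a ground set `G`: the smallest set containing `G` and
closed under the `(S, 1/2)`-operation. -/
inductive TsirelsonExt (G : Set (ℕ → ℝ)) : (ℕ → ℝ) → Prop
  | base {f : ℕ → ℝ} (hf : f ∈ G) : TsirelsonExt G f
  | op (n : ℕ) (hn : 1 ≤ n) (f : Fin n → ℕ → ℝ)
      (hmem : ∀ i, TsirelsonExt G (f i))
      (hne : ∀ i, (support (f i)).Nonempty)
      (hmin : ∀ i, ∀ m ∈ support (f i), n ≤ m)
      (hsucc : ∀ i j : Fin n, i < j →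
        ∀ a ∈ support (f i), ∀ b ∈ support (f j), a < b) :
      TsirelsonExt G (fun m => (1 / 2 : ℝ) * ∑ i, f i m)

/-- The range of a functional: the smallest interval of ℕ containing its support. -/
def rangeSet (g : ℕ → ℝ) : Set ℕ :=
  {n | ∃ i ∈ support g, ∃ j ∈ support g, i ≤ n ∧ n ≤ j}

open Classical in
/-- A tree analysis of `f ∈ W_G`, indexed by a finite tree of finite sequences of naturals
(ordered by the initial segment/prefix relation, with root the empty sequence, the children
of `a` being the nodes `a ++ [n]`). -/
structure TreeAnalysis (G : Set (ℕ → ℝ)) (f : ℕ → ℝ) where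
  A : Finset (List ℕ)
  root_mem : ([] : List ℕ) ∈ A
  prefix_closed : ∀ a ∈ A, ∀ b : List ℕ, b <+: a → b ∈ A
  F : List ℕ → ℕ → ℝ
  root_eq : F [] = f
  leaf_mem : ∀ a ∈ A, (∀ n : ℕ, a ++ [n] ∉ A) → F a ∈ G
  node_mem : ∀ a ∈ A, (∃ n : ℕ, a ++ [n] ∈ A) → TsirelsonExt G (F a)
  node_disj : ∀ a ∈ A, ∀ m n : ℕ, a ++ [m] ∈ A → a ++ [n] ∈ A → m ≠ n →
    rangeSet (F (a ++ [m])) ∩ rangeSet (F (a ++ [n])) = ∅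
  node_eq : ∀ a ∈ A, (∃ n : ℕ, a ++ [n] ∈ A) →
    F a = fun m => (1 / 2 : ℝ) *
      ∑ b ∈ A.filter (fun b => ∃ n : ℕ, b = a ++ [n]), F b m

/-- The tree of the combined analysis: the root together with the shifted trees. -/
noncomputable def treeA {G : Set (ℕ → ℝ)} {n : ℕ} {f : Fin n → ℕ → ℝ}
    (T : ∀ i, TreeAnalysis G (f i)) : Finset (List ℕ) :=
  insert [] (Finset.univ.biUnion fun i : Fin n => ((T i).A).image (List.cons i.val))

/-- The functionals of the combined analysis. -/
noncomputable def treeF {G : Set (ℕ → ℝ)} {n : ℕ} {f : Fin n → ℕ → ℝ}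
    (T : ∀ i, TreeAnalysis G (f i)) : List ℕ → ℕ → ℝ
  | [] => fun m => (1 / 2 : ℝ) * ∑ i, f i m
  | k :: a => if h : k < n then (T ⟨k, h⟩).F a else 0

lemma mem_treeA_cons {G : Set (ℕ → ℝ)} {n : ℕ} {f : Fin n → ℕ → ℝ}
    (T : ∀ i, TreeAnalysis G (f i)) (k : ℕ) (a : List ℕ) :
    (k :: a) ∈ treeA T ↔ ∃ h : k < n, a ∈ (T ⟨k, h⟩).A := by
  simp only [treeA, Finset.mem_insert, Finset.mem_biUnion, Finset.mem_image, Finset.mem_univ,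
    true_and]
  constructor
  · rintro (h | ⟨i, b, hb, heq⟩)
    · simp at h
    · injection heq with h1 h2
      subst h1; subst h2
      exact ⟨i.isLt, hb⟩
  · rintro ⟨h, ha⟩
    exact Or.inr ⟨⟨k, h⟩, a, ha, rfl⟩

lemma treeF_cons {G : Set (ℕ → ℝ)} {n : ℕ} {f : Fin n → ℕ → ℝ}
    (T : ∀ i, TreeAnalysis G (f i)) {k : ℕ} (h : k < n) (a : List ℕ) :
    treeF T (k :: a) = (T ⟨k, h⟩).F a := by
  simp only [treeF, dif_pos h]

/-- every `f ∈ W_G` admits a tree analysis. -/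
theorem statement4 (G : Set (ℕ → ℝ)) (hG : IsNormingSet G)
    (f : ℕ → ℝ) (hf : TsirelsonExt G f) :
    Nonempty (TreeAnalysis G f) := by
  classical
  induction hf with
  | @base g hg =>
    refine ⟨⟨{[]}, by simp, ?_, fun _ => g, rfl, fun _ _ _ => hg, ?_, ?_, ?_⟩⟩
    · intro a ha b hb
      simp only [Finset.mem_singleton] at ha
      subst ha
      simp [List.prefix_nil.mp hb]
    · rintro a ha ⟨m, hm⟩
      simp only [Finset.mem_singleton] at hm
      simp at hm
    · intro a ha m m' hm hm' hne
      simp only [Finset.mem_singleton] at hm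
      simp at hm
    · rintro a ha ⟨m, hm⟩
      simp only [Finset.mem_singleton] at hm
      simp at hm
  | @op n hn f hmem hne hmin hsucc ih =>
    let T : ∀ i : Fin n, TreeAnalysis G (f i) := fun i => (ih i).some
    -- disjointness of the ranges of the `f i`
    have key : ∀ i j : Fin n, i ≠ j → rangeSet (f i) ∩ rangeSet (f j) = ∅ := by
      have main : ∀ i j : Fin n, i < j → rangeSet (f i) ∩ rangeSet (f j) = ∅ := by
        intro i j hij
        ext x
        simp only [Set.mem_inter_iff, Set.mem_empty_iff_false, iff_false, rangeSet,
          Set.mem_setOf_eq, not_and]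
        rintro ⟨a, ha, b, hb, hax, hxb⟩ ⟨c, hc, d, hd, hcx, hxd⟩
        exact absurd (hsucc i j hij b hb c hc) (by omega)
      intro i j hij
      rcases hij.lt_or_gt with h | h
      · exact main i j h
      · rw [Set.inter_comm]; exact main j i h
    refine ⟨⟨treeA T, Finset.mem_insert_self _ _, ?_, treeF T, rfl, ?_, ?_, ?_, ?_⟩⟩
    · -- prefix closed
      rintro a ha (_ | ⟨x, b⟩) hb
      · exact Finset.mem_insert_self _ _
      · rcases a with _ | ⟨k, a⟩
        · simp at hb
        · rw [List.cons_prefix_cons] at hb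
          obtain ⟨rfl, hb⟩ := hb
          obtain ⟨h, ha'⟩ := (mem_treeA_cons T _ _).mp ha
          exact (mem_treeA_cons T _ _).mpr ⟨h, (T ⟨x, h⟩).prefix_closed a ha' b hb⟩
    · -- leaf_mem
      rintro (_ | ⟨k, a⟩) ha hleaf
      · exact absurd ((mem_treeA_cons T 0 []).mpr ⟨hn, (T ⟨0, hn⟩).root_mem⟩)
          (by simpa using hleaf 0)
      · obtain ⟨h, ha'⟩ := (mem_treeA_cons T _ _).mp ha
        rw [treeF_cons T h]
        refine (T ⟨k, h⟩).leaf_mem a ha' fun m hm => hleaf m ?_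
        rw [List.cons_append]
        exact (mem_treeA_cons T _ _).mpr ⟨h, hm⟩
    · -- node_mem
      rintro (_ | ⟨k, a⟩) ha hch
      · exact TsirelsonExt.op n hn f hmem hne hmin hsucc
      · obtain ⟨h, ha'⟩ := (mem_treeA_cons T _ _).mp ha
        obtain ⟨m, hm⟩ := hch
        rw [List.cons_append] at hm
        obtain ⟨h', hm'⟩ := (mem_treeA_cons T _ _).mp hm
        rw [treeF_cons T h]
        exact (T ⟨k, h⟩).node_mem a ha' ⟨m, hm'⟩
    · -- node_disj
      rintro (_ | ⟨k, a⟩) ha m m' hm hm' hmm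
      · simp only [List.nil_append] at hm hm' ⊢
        obtain ⟨h1, -⟩ := (mem_treeA_cons T _ _).mp hm
        obtain ⟨h2, -⟩ := (mem_treeA_cons T _ _).mp hm'
        rw [treeF_cons T h1, treeF_cons T h2, (T ⟨m, h1⟩).root_eq, (T ⟨m', h2⟩).root_eq]
        exact key _ _ (Fin.ne_of_val_ne hmm)
      · obtain ⟨h, ha'⟩ := (mem_treeA_cons T _ _).mp ha
        simp only [List.cons_append] at hm hm' ⊢
        obtain ⟨h3, hm2⟩ := (mem_treeA_cons T _ _).mp hm
        obtain ⟨h4, hm2'⟩ := (mem_treeA_cons T _ _).mp hm'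
        rw [treeF_cons T h, treeF_cons T h]
        exact (T ⟨k, h⟩).node_disj a ha' m m' hm2 hm2' hmm
    · -- node_eq
      rintro (_ | ⟨k, a⟩) ha hch
      · have hset : (treeA T).filter (fun b => ∃ m : ℕ, b = [] ++ [m]) =
            Finset.univ.image (fun i : Fin n => [(i : ℕ)]) := by
          ext b
          simp only [Finset.mem_filter, Finset.mem_image, Finset.mem_univ, true_and,
            List.nil_append]
          constructor
          · rintro ⟨hb, m, rfl⟩
            obtain ⟨h, -⟩ := (mem_treeA_cons T _ _).mp hb
            exact ⟨⟨m, h⟩, rfl⟩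
          · rintro ⟨i, rfl⟩
            exact ⟨(mem_treeA_cons T _ _).mpr ⟨i.isLt, (T ⟨(i : ℕ), i.isLt⟩).root_mem⟩, i, rfl⟩
        funext m
        show (1 / 2 : ℝ) * ∑ i, f i m = _
        rw [hset, Finset.sum_image (by intro i _ j _ hij; exact Fin.ext (by simpa using hij))]
        congr 1
        refine Finset.sum_congr rfl fun i _ => ?_
        rw [treeF_cons T i.isLt, (T ⟨(i : ℕ), i.isLt⟩).root_eq]
      · obtain ⟨h, ha'⟩ := (mem_treeA_cons T _ _).mp ha
        obtain ⟨m0, hm0⟩ := hch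
        rw [List.cons_append] at hm0
        obtain ⟨h5, hm0'⟩ := (mem_treeA_cons T _ _).mp hm0
        have hset : (treeA T).filter (fun b => ∃ m : ℕ, b = (k :: a) ++ [m]) =
            ((T ⟨k, h⟩).A.filter (fun b => ∃ m : ℕ, b = a ++ [m])).image (List.cons k) := by
          ext b
          simp only [Finset.mem_filter, Finset.mem_image]
          constructor
          · rintro ⟨hb, m, rfl⟩
            rw [List.cons_append] at hb
            obtain ⟨h6, hb'⟩ := (mem_treeA_cons T _ _).mp hb
            exact ⟨a ++ [m], ⟨hb', m, rfl⟩, by rw [List.cons_append]⟩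
          · rintro ⟨c, ⟨hc, m, rfl⟩, rfl⟩
            exact ⟨by rw [← List.cons_append]; exact (mem_treeA_cons T _ _).mpr ⟨h, hc⟩,
              m, by rw [List.cons_append]⟩
        funext m
        rw [treeF_cons T h, (T ⟨k, h⟩).node_eq a ha' ⟨m0, hm0'⟩]
        beta_reduce
        rw [hset, Finset.sum_image (by intro i _ j _ hij; simpa using hij)]
        congr 1
        refine Finset.sum_congr rfl fun b _ => ?_
        rw [treeF_cons T h]
end

section
/- Let (T, ≤) be a countable well-founded tree and let (μ_i) be a bounded, disjointly supported sequence of positive measures on T. Assume there is a summable function μ : T → [0,∞) such that lim_i μ_i(V_t) = μ(V_t) for every t ∈ T, and assume that for every t ∈ T the limit ν(t) := lim_i μ_i(succ(t)) exists. Then for every t ∈ T whose set succ(t) of immediate successors is infinite, and for every bijective enumeration (t_j)_{j∈ℕ} of succ(t), the iterated limit lim_{j→∞} lim_{i→∞} μ_i(∪_{k≥j} (V_{t_k} ∖ {t_k})) exists and μ(t) = ν(t) + lim_{j→∞} lim_{i→∞} μ_i(∪_{k≥j} (V_{t_k} ∖ {t_k})). In particular, μ(t) = ν(t) if and only if this iterated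 limit is zero. -/
/-!
Since predecessor sets are finite chains, `V_t` is the disjoint union of `{t}` and the cones
`V_s`, `s ∈ succ t`. Hence for every summable `λ` the mass `λ(⋃_{k ≥ j} (V_{e k} ∖ {e k}))` is
`λ(V_t) - λ(t) - λ(succ t) - ∑_{k < j} (λ(V_{e k}) - λ(e k))`. Disjointness of the supports makes
`μ_i(x) → 0` for every point `x`, so the inner limit is `μ(V_t) - ν(t) - ∑_{k < j} μ(V_{e k})`, and
as `j → ∞` this tends to `μ(V_t) - ν(t) - (μ(V_t) - μ(t)) = μ(t) - ν(t)`.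
-/

open Filter Topology

/-- The measure of a set `A ⊆ α` under a (summable, positive) density `μ : α → ℝ`. -/
noncomputable def msetT {α : Type*} (μ : α → ℝ) (A : Set α) : ℝ :=
  ∑' t, A.indicator μ t

/-- The set of immediate successors of `t` (elements covering `t`). -/
def succSet {α : Type*} [PartialOrder α] (t : α) : Set α := {s | t ⋖ s}

open Set

section msetT

variable {α : Type*} {μ : α → ℝ}

lemma msetT_singleton (a : α) : msetT μ {a} = μ a := by
  rw [msetT, tsum_eq_single a] <;> simp_all

lemma msetT_union (hμ : Summable μ) {A B : Set α} (h : Disjoint A B) :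
    msetT μ (A ∪ B) = msetT μ A + msetT μ B := by
  rw [msetT, indicator_union_of_disjoint h, (hμ.indicator A).tsum_add (hμ.indicator B)]
  rfl

lemma msetT_insert (hμ : Summable μ) {a : α} {A : Set α} (ha : a ∉ A) :
    msetT μ (insert a A) = μ a + msetT μ A := by
  rw [insert_eq, msetT_union hμ (disjoint_singleton_left.2 ha), msetT_singleton]

lemma msetT_diff_singleton (hμ : Summable μ) {a : α} {A : Set α} (ha : a ∈ A) :
    msetT μ (A \ {a}) = msetT μ A - μ a := by
  conv_rhs => rw [← insert_sdiff_self_of_mem ha, msetT_insert hμ (fun h => h.2 rfl)]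
  ring

lemma hasSum_msetT_iUnion {ι : Type*} (hμ : Summable μ) {A : ι → Set α}
    (hA : Pairwise (Function.onFun Disjoint A)) :
    HasSum (fun k => msetT μ (A k)) (msetT μ (⋃ k, A k)) := by
  have hU : HasSum (fun x : ⋃ k, A k => μ x) (msetT μ (⋃ k, A k)) :=
    hasSum_subtype_iff_indicator.2 (hμ.indicator _).hasSum
  have hsigma : HasSum (fun p : Σ k, A k => μ p.2) (msetT μ (⋃ k, A k)) :=
    (Equiv.ofBijective _ (sigmaToiUnion_bijective A hA)).hasSum_iff.2 hU
  exact hsigma.sigma fun k => hasSum_subtype_iff_indicator.2 (hμ.indicator (A k)).hasSum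

lemma hasSum_msetT_range {ι : Type*} (hμ : Summable μ) {e : ι → α} (he : Function.Injective e) :
    HasSum (fun k => μ (e k)) (msetT μ (range e)) :=
  he.hasSum_range_iff.1 (hasSum_subtype_iff_indicator.2 (hμ.indicator _).hasSum)

lemma msetT_iUnion_ge (hμ : Summable μ) {A : ℕ → Set α}
    (hA : Pairwise (Function.onFun Disjoint A)) (j : ℕ) :
    msetT μ (⋃ (k : ℕ) (_ : j ≤ k), A k) =
      msetT μ (⋃ k, A k) - ∑ k ∈ Finset.range j, msetT μ (A k) := by
  have hshift : (⋃ k, A (k + j)) = ⋃ (k : ℕ) (_ : j ≤ k), A k := by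
    ext x
    simp only [mem_iUnion]
    exact ⟨fun ⟨k, hk⟩ => ⟨k + j, by omega, hk⟩,
      fun ⟨k, hjk, hk⟩ => ⟨k - j, by rwa [Nat.sub_add_cancel hjk]⟩⟩
  have htail := hasSum_msetT_iUnion hμ (hA.comp_of_injective (add_left_injective j))
  rw [hshift] at htail
  exact htail.unique ((hasSum_nat_add_iff' j).2 (hasSum_msetT_iUnion hμ hA))

end msetT

section Tree

variable {α : Type*} [PartialOrder α]

lemma exists_covBy_le_of_finite_Iio {t x : α} (hx : (Iio x).Finite) (h : t < x) :
    ∃ s, t ⋖ s ∧ s ≤ x := by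
  have hfin : (Ioc t x).Finite := (hx.insert x).subset fun _ hy =>
    hy.2.eq_or_lt
  obtain ⟨s, hs⟩ := hfin.exists_minimal ⟨x, h, le_rfl⟩
  exact ⟨s, ⟨hs.prop.1, fun z htz hzs => hs.not_prop_of_lt hzs ⟨htz, hzs.le.trans hs.prop.2⟩⟩,
    hs.prop.2⟩

lemma le_total_of_le_of_le
    (hchain : ∀ t : α, ∀ a, a < t → ∀ b, b < t → a ≤ b ∨ b ≤ a)
    {a b x : α} (ha : a ≤ x) (hb : b ≤ x) : a ≤ b ∨ b ≤ a := by
  rcases ha.eq_or_lt with rfl | ha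
  · exact Or.inr hb
  rcases hb.eq_or_lt with rfl | hb
  · exact Or.inl ha.le
  exact hchain x a ha b hb

lemma CovBy.disjoint_Ici
    (hchain : ∀ t : α, ∀ a, a < t → ∀ b, b < t → a ≤ b ∨ b ≤ a)
    {t a b : α} (ha : t ⋖ a) (hb : t ⋖ b) (hab : a ≠ b) : Disjoint (Ici a) (Ici b) := by
  refine Set.disjoint_left.2 fun x hax hbx => ?_
  rcases le_total_of_le_of_le hchain hax hbx with h | h
  · exact hb.2 ha.1 (h.lt_of_ne hab)
  · exact ha.2 hb.1 (h.lt_of_ne hab.symm)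

lemma Ici_eq_insert_iUnion_Ici_succ (hfin : ∀ x : α, (Iio x).Finite) {t : α} {e : ℕ → α}
    (hrange : range e = succSet t) : Ici t = insert t (⋃ k, Ici (e k)) := by
  ext x
  simp only [mem_insert_iff, mem_iUnion, mem_Ici]
  constructor
  · intro hx
    rcases hx.eq_or_lt with rfl | hlt
    · exact Or.inl rfl
    obtain ⟨s, hs, hsx⟩ := exists_covBy_le_of_finite_Iio (hfin x) hlt
    obtain ⟨k, rfl⟩ : s ∈ range e := hrange ▸ hs
    exact Or.inr ⟨k, hsx⟩
  · rintro (rfl | ⟨k, hk⟩)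
    · exact le_rfl
    · exact (hrange ▸ mem_range_self k : e k ∈ succSet t).le.trans hk

variable {t : α} {e : ℕ → α} {ρ : α → ℝ}

lemma pairwise_disjoint_Ici_succ
    (hchain : ∀ t : α, ∀ a, a < t → ∀ b, b < t → a ≤ b ∨ b ≤ a)
    (he : Function.Injective e) (hrange : range e = succSet t) :
    Pairwise (Function.onFun Disjoint fun k => Ici (e k)) := fun i j hij =>
  CovBy.disjoint_Ici hchain (hrange ▸ mem_range_self i : e i ∈ succSet t)
    (hrange ▸ mem_range_self j : e j ∈ succSet t) (he.ne hij)

lemma hasSum_msetT_Ici_succ (hfin : ∀ x : α, (Iio x).Finite)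
    (hchain : ∀ t : α, ∀ a, a < t → ∀ b, b < t → a ≤ b ∨ b ≤ a)
    (he : Function.Injective e) (hrange : range e = succSet t) (hρ : Summable ρ) :
    HasSum (fun k => msetT ρ (Ici (e k))) (msetT ρ (Ici t) - ρ t) := by
  have ht : t ∉ ⋃ k, Ici (e k) := by
    simp only [mem_iUnion, mem_Ici, not_exists]
    exact fun k hk => (hrange ▸ mem_range_self k : e k ∈ succSet t).lt.not_ge hk
  rw [Ici_eq_insert_iUnion_Ici_succ hfin hrange, msetT_insert hρ ht, add_sub_cancel_left]
  exact hasSum_msetT_iUnion hρ (pairwise_disjoint_Ici_succ hchain he hrange)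

lemma msetT_iUnion_Ici_diff_succ (hfin : ∀ x : α, (Iio x).Finite)
    (hchain : ∀ t : α, ∀ a, a < t → ∀ b, b < t → a ≤ b ∨ b ≤ a)
    (he : Function.Injective e) (hrange : range e = succSet t) (hρ : Summable ρ) (j : ℕ) :
    msetT ρ (⋃ (k : ℕ) (_ : j ≤ k), (Ici (e k) \ {e k})) =
      msetT ρ (Ici t) - ρ t - msetT ρ (succSet t)
        - ∑ k ∈ Finset.range j, (msetT ρ (Ici (e k)) - ρ (e k)) := by
  have hdisj : Pairwise (Function.onFun Disjoint fun k => Ici (e k) \ {e k}) := fun i j hij =>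
    (pairwise_disjoint_Ici_succ hchain he hrange hij).mono sdiff_subset sdiff_subset
  have hcone : ∀ k, msetT ρ (Ici (e k) \ {e k}) = msetT ρ (Ici (e k)) - ρ (e k) :=
    fun k => msetT_diff_singleton hρ (mem_Ici.2 le_rfl)
  have htotal : HasSum (fun k => msetT ρ (Ici (e k) \ {e k}))
      (msetT ρ (Ici t) - ρ t - msetT ρ (succSet t)) := by
    simp_rw [hcone]
    exact (hasSum_msetT_Ici_succ hfin hchain he hrange hρ).sub
      (hrange ▸ hasSum_msetT_range hρ he)
  rw [msetT_iUnion_ge hρ hdisj, (hasSum_msetT_iUnion hρ hdisj).unique htotal]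
  simp_rw [hcone]

end Tree

lemma tendsto_atTop_zero_of_disjoint_support {α M : Type*} [Zero M] [TopologicalSpace M]
    {f : ℕ → α → M}
    (hf : ∀ i j, i ≠ j → Disjoint (Function.support (f i)) (Function.support (f j))) (x : α) :
    Tendsto (fun i => f i x) atTop (𝓝 0) := by
  have hx : {i | f i x ≠ 0}.Subsingleton := fun i hi j hj =>
    by_contra fun hij => Set.disjoint_left.1 (hf i j hij) hi hj
  refine tendsto_nhds_of_eventually_eq ?_
  rw [← Nat.cofinite_eq_atTop]
  filter_upwards [hx.finite.eventually_cofinite_notMem] with i hi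
  exact not_not.1 hi

theorem statement5_general {α : Type*} [PartialOrder α]
    (hfin : ∀ t : α, {s | s < t}.Finite)
    (hchain : ∀ t : α, ∀ a, a < t → ∀ b, b < t → a ≤ b ∨ b ≤ a)
    (μs : ℕ → α → ℝ)
    (hsum : ∀ i, Summable (μs i))
    (hdisj : ∀ i j, i ≠ j →
      Disjoint (Function.support (μs i)) (Function.support (μs j)))
    (μ : α → ℝ) (hμsum : Summable μ)
    (hw : ∀ t : α, Tendsto (fun i => msetT (μs i) (Set.Ici t)) atTop
      (𝓝 (msetT μ (Set.Ici t))))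
    (ν : α → ℝ)
    (hν : ∀ t : α, Tendsto (fun i => msetT (μs i) (succSet t)) atTop (𝓝 (ν t)))
    (t : α)
    (e : ℕ → α) (einj : Function.Injective e) (erange : Set.range e = succSet t) :
    ∃ g : ℕ → ℝ,
      (∀ j : ℕ, Tendsto
        (fun i => msetT (μs i) (⋃ (k : ℕ) (_ : j ≤ k), (Set.Ici (e k) \ {e k})))
        atTop (𝓝 (g j))) ∧
      ∃ L : ℝ, Tendsto g atTop (𝓝 L) ∧
        μ t = ν t + L ∧ (μ t = ν t ↔ L = 0) := by
  have hzero := tendsto_atTop_zero_of_disjoint_support hdisj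
  refine ⟨fun j => msetT μ (Ici t) - ν t - ∑ k ∈ Finset.range j, msetT μ (Ici (e k)),
    fun j => ?_, μ t - ν t, ?_, by ring, sub_eq_zero.symm⟩
  · simp_rw [msetT_iUnion_Ici_diff_succ hfin hchain einj erange (hsum _)]
    simpa using (((hw t).sub (hzero t)).sub (hν t)).sub
      (tendsto_finsetSum _ fun k _ => (hw (e k)).sub (hzero (e k)))
  · have hpartial := (hasSum_msetT_Ici_succ hfin hchain einj erange hμsum).tendsto_sum_nat
    convert (tendsto_const_nhds (x := msetT μ (Ici t) - ν t)).sub hpartial using 2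
    ring

/-- let `(T, ≤)` be a countable well-founded tree, `(μs i)` a bounded,
disjointly supported sequence of positive measures converging weak* to `μ` and whose
successor sums converge to `ν`. Then for every `t` with infinitely many immediate
successors and every bijective enumeration `e` of `succ t`, the iterated limit
`lim_j lim_i μs i (⋃_{k ≥ j} (V_{e k} ∖ {e k}))` exists and equals `μ t − ν t`;
in particular `μ t = ν t` iff this iterated limit is zero. -/
theorem statement5 {α : Type*} [PartialOrder α] [Countable α]
    (hfin : ∀ t : α, {s | s < t}.Finite)
    (hchain : ∀ t : α, ∀ a, a < t → ∀ b, b < t → a ≤ b ∨ b ≤ a)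
    (hwf : ¬ ∃ c : ℕ → α, StrictMono c)
    (μs : ℕ → α → ℝ)
    (hnn : ∀ i t, 0 ≤ μs i t)
    (hsum : ∀ i, Summable (μs i))
    (hbdd : ∃ C : ℝ, ∀ i, msetT (μs i) Set.univ ≤ C)
    (hdisj : ∀ i j, i ≠ j →
      Disjoint (Function.support (μs i)) (Function.support (μs j)))
    (μ : α → ℝ) (hμnn : ∀ t, 0 ≤ μ t) (hμsum : Summable μ)
    (hw : ∀ t : α, Tendsto (fun i => msetT (μs i) (Set.Ici t)) atTop
      (𝓝 (msetT μ (Set.Ici t))))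
    (ν : α → ℝ)
    (hν : ∀ t : α, Tendsto (fun i => msetT (μs i) (succSet t)) atTop (𝓝 (ν t)))
    (t : α) (hinf : (succSet t).Infinite)
    (e : ℕ → α) (einj : Function.Injective e) (erange : Set.range e = succSet t) :
    ∃ g : ℕ → ℝ,
      (∀ j : ℕ, Tendsto
        (fun i => msetT (μs i) (⋃ (k : ℕ) (_ : j ≤ k), (Set.Ici (e k) \ {e k})))
        atTop (𝓝 (g j))) ∧
      ∃ L : ℝ, Tendsto g atTop (𝓝 L) ∧
        μ t = ν t + L ∧ (μ t = ν t ↔ L = 0) :=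
  statement5_general hfin hchain μs hsum hdisj μ hμsum hw ν hν t e einj erange
end

section
/- Let (T, ≤) be a countable well-founded tree and let (μ_i) be a bounded, disjointly supported sequence of positive measures on T. Then there exist a subsequence (μ_{i_n}) of (μ_i) and a summable function ν : T → [0,∞) such that ν(t) = lim_n μ_{i_n}(succ(t)) for every t ∈ T (i.e., ν is the successor-determined limit of (μ_{i_n}), and it is a bounded positive measure on T). -/
open Filter Topology

lemma succSet_disjoint {α : Type*} [PartialOrder α]
    (hchain : ∀ t : α, ∀ a, a < t → ∀ b, b < t → a ≤ b ∨ b ≤ a)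
    {t t' : α} (h : t ≠ t') : Disjoint (succSet t) (succSet t') := by
  rw [Set.disjoint_left]
  rintro x hx hx'
  rcases hchain x t hx.1 t' hx'.1 with hle | hle
  · rcases lt_or_eq_of_le hle with hlt | rfl
    · exact hx.2 hlt hx'.1
    · exact h rfl
  · rcases lt_or_eq_of_le hle with hlt | rfl
    · exact hx'.2 hlt hx.1
    · exact h rfl

lemma sum_msetT_succ_le {α : Type*} [PartialOrder α]
    (hchain : ∀ t : α, ∀ a, a < t → ∀ b, b < t → a ≤ b ∨ b ≤ a)
    (μ : α → ℝ) (hnn : ∀ t, 0 ≤ μ t) (hsum : Summable μ)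
    (s : Finset α) : ∑ t ∈ s, msetT μ (succSet t) ≤ ∑' x, μ x := by
  have hind : ∀ t : α, Summable ((succSet t).indicator μ) := fun t => hsum.indicator _
  simp only [msetT]
  rw [← Summable.tsum_finsetSum (fun t _ => hind t)]
  refine Summable.tsum_le_tsum ?_ (summable_sum (fun t _ => hind t)) hsum
  intro x
  by_cases hx : ∃ t ∈ s, x ∈ succSet t
  · obtain ⟨t, hts, hxt⟩ := hx
    rw [Finset.sum_eq_single t]
    · rw [Set.indicator_of_mem hxt]
    · intro t' ht's hne
      have hd := succSet_disjoint hchain hne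
      exact Set.indicator_of_notMem (fun hx' => Set.disjoint_left.mp hd hx' hxt) μ
    · intro h; exact absurd hts h
  · push_neg at hx
    calc ∑ t ∈ s, (succSet t).indicator μ x = 0 :=
          Finset.sum_eq_zero fun t ht => Set.indicator_of_notMem (hx t ht) μ
    _ ≤ μ x := hnn x

/-- every bounded, disjointly supported sequence of positive measures on a
countable well-founded tree has a subsequence admitting a successor-determined limit `ν`,
which is itself a bounded positive measure. -/
theorem statement6 {α : Type*} [PartialOrder α] [Countable α]
    (hfin : ∀ t : α, {s | s < t}.Finite)
    (hchain : ∀ t : α, ∀ a, a < t → ∀ b, b < t → a ≤ b ∨ b ≤ a)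
    (hwf : ¬ ∃ c : ℕ → α, StrictMono c)
    (μs : ℕ → α → ℝ)
    (hnn : ∀ i t, 0 ≤ μs i t)
    (hsum : ∀ i, Summable (μs i))
    (hbdd : ∃ C : ℝ, ∀ i, msetT (μs i) Set.univ ≤ C)
    (hdisj : ∀ i j, i ≠ j →
      Disjoint (Function.support (μs i)) (Function.support (μs j))) :
    ∃ φ : ℕ → ℕ, StrictMono φ ∧ ∃ ν : α → ℝ,
      (∀ t, 0 ≤ ν t) ∧ Summable ν ∧
      ∀ t : α, Tendsto (fun n => msetT (μs (φ n)) (succSet t)) atTop (𝓝 (ν t)) := by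
  obtain ⟨C, hC⟩ := hbdd
  have htsum_eq : ∀ i, msetT (μs i) Set.univ = ∑' x, μs i x := by
    intro i; simp [msetT]
  have hle_tsum : ∀ i (A : Set α), msetT (μs i) A ≤ ∑' x, μs i x := by
    intro i A
    exact Summable.tsum_le_tsum (Set.indicator_le_self' (fun x _ => hnn i x))
      ((hsum i).indicator _) (hsum i)
  have hmset_nn : ∀ i (A : Set α), 0 ≤ msetT (μs i) A := by
    intro i A
    exact tsum_nonneg fun x => Set.indicator_nonneg (fun y _ => hnn i y) x
  set F : ℕ → α → ℝ := fun n t => msetT (μs n) (succSet t) with hF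
  have hmem : ∀ n, F n ∈ Set.pi Set.univ (fun _ : α => Set.Icc (0 : ℝ) C) := by
    intro n t _
    refine ⟨hmset_nn n _, ?_⟩
    calc msetT (μs n) (succSet t) ≤ ∑' x, μs n x := hle_tsum n _
      _ = msetT (μs n) Set.univ := (htsum_eq n).symm
      _ ≤ C := hC n
  have hcomp : IsCompact (Set.pi Set.univ fun _ : α => Set.Icc (0 : ℝ) C) :=
    isCompact_univ_pi fun _ => isCompact_Icc
  obtain ⟨f, hfmem, φ, hφ, hconv⟩ := hcomp.tendsto_subseq hmem
  have hcoord : ∀ t : α, Tendsto (fun n => F (φ n) t) atTop (𝓝 (f t)) := by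
    intro t
    exact (tendsto_pi_nhds.mp hconv) t
  refine ⟨φ, hφ, f, fun t => (hfmem t (Set.mem_univ t)).1, ?_, hcoord⟩
  refine summable_of_sum_le (c := C) (fun t => (hfmem t (Set.mem_univ t)).1) ?_
  intro u
  have hlim : Tendsto (fun n => ∑ t ∈ u, F (φ n) t) atTop (𝓝 (∑ t ∈ u, f t)) :=
    tendsto_finset_sum u fun t _ => hcoord t
  refine le_of_tendsto hlim (Eventually.of_forall fun n => ?_)
  calc ∑ t ∈ u, F (φ n) t ≤ ∑' x, μs (φ n) x :=
        sum_msetT_succ_le hchain (μs (φ n)) (hnn (φ n)) (hsum (φ n)) u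
    _ = msetT (μs (φ n)) Set.univ := (htsum_eq (φ n)).symm
    _ ≤ C := hC (φ n)
end

section
/- Let (T, ≤) be a countable well-founded tree and let (μ_i) be a bounded, disjointly supported sequence of positive measures on T. Assume there is a summable function ν : T → [0,∞) such that ν(t) = lim_i μ_i(succ(t)) for every t ∈ T. Then there exist an infinite set L ⊆ ℕ and, for each i ∈ L, a partition of supp μ_i into two disjoint sets A_i and B_i such that, writing μ_i¹ for the measure given by μ_i¹(C) = μ_i(C ∩ A_i) and μ_i² for the measure given by μ_i²(C) = μ_i(C ∩ B_i): (i) for every t ∈ T, lim_{i∈L} μ_i¹(V_t) = ν(V_t) and lim_{i∈L} μ_i¹(succ(t)) = ν(t); and (ii) for every t ∈ T, μ_i²(succ(t)) = 0 for all but finitely many i ∈ L. -/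
/-!
Exhaust `T` by finite sets `G k`. Since the supports are disjoint, every point carries mass for
at most one `i`, so one can pick indices `i_k` with `μ_{i_k}` vanishing on `G k` and
`∑_{s ∈ G k} |μ_{i_k}(succ s) - ν s| → 0`. Take `A_{i_k}` to be the part of the support inside
`⋃_{s ∈ G k} succ s`. Successor sets are disjoint, and a point of `V_t` in `succ s` with `s ∉ V_t`
is `t` itself, which carries no mass once `t ∈ G k`; hence
`μ¹_{i_k}(V_t) = ∑_{s ∈ G k, t ≤ s} μ_{i_k}(succ s)`, which is close to
`∑_{s ∈ G k, t ≤ s} ν s → ν(V_t)`. Similarly `succ t ⊆ A_{i_k}` on the support, so `B_{i_k}`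
misses `succ t`.
-/

open Filter Topology

section msetT

variable {α : Type*} {μ : α → ℝ}

@[simp]
lemma msetT_empty (μ : α → ℝ) : msetT μ ∅ = 0 := by
  simp [msetT]

lemma msetT_congr_of_mem_support {A B : Set α}
    (h : ∀ x ∈ Function.support μ, x ∈ A ↔ x ∈ B) : msetT μ A = msetT μ B := by
  classical
  unfold msetT
  refine tsum_congr fun x => ?_
  by_cases hx : μ x = 0
  · simp [Set.indicator_apply, hx]
  · simp [Set.indicator_apply, h x hx]

lemma msetT_biUnion_finset {ι : Type*} (hμ : Summable μ) (s : Finset ι) (t : ι → Set α)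
    (hd : (s : Set ι).PairwiseDisjoint t) :
    msetT μ (⋃ i ∈ s, t i) = ∑ i ∈ s, msetT μ (t i) := by
  simp only [msetT, Finset.indicator_biUnion_apply s t hd]
  exact Summable.tsum_finsetSum fun i _ => hμ.indicator (t i)

lemma eventually_eq_zero_of_disjoint_support {μs : ℕ → α → ℝ}
    (hdisj : ∀ i j, i ≠ j → Disjoint (Function.support (μs i)) (Function.support (μs j)))
    (s : α) : ∀ᶠ i in atTop, μs i s = 0 := by
  have hsub : {i | μs i s ≠ 0}.Subsingleton := fun i hi j hj =>
    by_contra fun hij => Set.disjoint_left.mp (hdisj i j hij) hi hj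
  rw [← Nat.cofinite_eq_atTop]
  filter_upwards [hsub.finite.eventually_cofinite_notMem] with i hi
  simpa using hi

end msetT

section Tree

variable {α : Type*} [PartialOrder α]

lemma pairwise_disjoint_succSet
    (hchain : ∀ t : α, ∀ a, a < t → ∀ b, b < t → a ≤ b ∨ b ≤ a) :
    Pairwise fun a b : α => Disjoint (succSet a) (succSet b) := by
  intro a b hab
  rw [Set.disjoint_left]
  intro u hua hub
  rcases hchain u a hua.lt b hub.lt with h | h
  · exact hua.2 (h.lt_of_ne hab) hub.lt
  · exact hub.2 (h.lt_of_ne hab.symm) hua.lt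

lemma le_of_mem_succSet_of_le
    (hchain : ∀ t : α, ∀ a, a < t → ∀ b, b < t → a ≤ b ∨ b ≤ a)
    {s t u : α} (hu : u ∈ succSet s) (htu : t ≤ u) (hut : u ≠ t) : t ≤ s := by
  rcases hchain u s hu.lt t (htu.lt_of_ne hut.symm) with h | h
  · rcases h.eq_or_lt with rfl | hst
    · exact le_rfl
    · exact absurd (htu.lt_of_ne hut.symm) (hu.2 hst)
  · exact h

lemma msetT_Ici_inter_support_inter_iUnion_succSet [DecidableLE α]
    (hchain : ∀ t : α, ∀ a, a < t → ∀ b, b < t → a ≤ b ∨ b ≤ a)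
    {μ : α → ℝ} (hμ : Summable μ) {G : Finset α} (hG : ∀ s ∈ G, μ s = 0) {t : α} (ht : t ∈ G) :
    msetT μ (Set.Ici t ∩ (Function.support μ ∩ ⋃ s ∈ G, succSet s)) =
      ∑ s ∈ G with t ≤ s, msetT μ (succSet s) := by
  rw [← msetT_biUnion_finset hμ _ _ ((pairwise_disjoint_succSet hchain).set_pairwise _)]
  refine msetT_congr_of_mem_support fun x hx => ?_
  have hxt : x ≠ t := fun h => hx (hG x (h ▸ ht))
  simp only [Set.mem_inter_iff, Set.mem_Ici, Set.mem_iUnion, Finset.mem_filter, exists_prop]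
  constructor
  · rintro ⟨htx, -, s, hs, hxs⟩
    exact ⟨s, ⟨hs, le_of_mem_succSet_of_le hchain hxs htx hxt⟩, hxs⟩
  · rintro ⟨s, ⟨hs, hts⟩, hxs⟩
    exact ⟨hts.trans hxs.lt.le, hx, s, hs, hxs⟩

end Tree

section Sequences

variable {α : Type*} [PartialOrder α] {m : ℕ → α → ℝ} {G : ℕ → Finset α} {ν : α → ℝ}

lemma tendsto_msetT_Ici_inter_support_inter_iUnion_succSet [DecidableLE α]
    (hchain : ∀ t : α, ∀ a, a < t → ∀ b, b < t → a ≤ b ∨ b ≤ a)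
    (hm : ∀ k, Summable (m k)) (hGmono : Monotone G) (hGexh : ∀ x, ∀ᶠ k in atTop, x ∈ G k)
    (hzero : ∀ k, ∀ s ∈ G k, m k s = 0)
    (hclose : Tendsto (fun k => ∑ s ∈ G k, |msetT (m k) (succSet s) - ν s|) atTop (𝓝 0))
    (hν : Summable ν) (t : α) :
    Tendsto (fun k => msetT (m k) (Set.Ici t ∩ (Function.support (m k) ∩ ⋃ s ∈ G k, succSet s)))
      atTop (𝓝 (msetT ν (Set.Ici t))) := by
  have hlim : Tendsto (fun k => ∑ s ∈ G k with t ≤ s, ν s) atTop (𝓝 (msetT ν (Set.Ici t))) := by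
    have := (hν.indicator (Set.Ici t)).hasSum.comp
      (tendsto_atTop_finset_of_monotone hGmono fun x => (hGexh x).exists)
    simpa only [msetT, Function.comp_def, Finset.sum_filter, Set.indicator_apply, Set.mem_Ici]
      using this
  have hdist : ∀ᶠ k in atTop,
      dist (∑ s ∈ G k with t ≤ s, ν s)
        (msetT (m k) (Set.Ici t ∩ (Function.support (m k) ∩ ⋃ s ∈ G k, succSet s))) ≤
      ∑ s ∈ G k, |msetT (m k) (succSet s) - ν s| := by
    filter_upwards [hGexh t] with k hk
    rw [msetT_Ici_inter_support_inter_iUnion_succSet hchain (hm k) (hzero k) hk, dist_comm,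
      Real.dist_eq, ← Finset.sum_sub_distrib]
    exact (Finset.abs_sum_le_sum_abs _ _).trans
      (Finset.sum_le_sum_of_subset_of_nonneg (Finset.filter_subset _ _) fun _ _ _ => abs_nonneg _)
  exact hlim.congr_dist (squeeze_zero' (.of_forall fun _ => dist_nonneg) hdist hclose)

lemma tendsto_msetT_succSet_inter_support_inter_iUnion_succSet
    (hGexh : ∀ x, ∀ᶠ k in atTop, x ∈ G k)
    (hclose : Tendsto (fun k => ∑ s ∈ G k, |msetT (m k) (succSet s) - ν s|) atTop (𝓝 0))
    (t : α) :
    Tendsto (fun k => msetT (m k) (succSet t ∩ (Function.support (m k) ∩ ⋃ s ∈ G k, succSet s)))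
      atTop (𝓝 (ν t)) := by
  have hdist : ∀ᶠ k in atTop,
      dist (ν t) (msetT (m k) (succSet t ∩ (Function.support (m k) ∩ ⋃ s ∈ G k, succSet s))) ≤
      ∑ s ∈ G k, |msetT (m k) (succSet s) - ν s| := by
    filter_upwards [hGexh t] with k hk
    have hsucc : msetT (m k) (succSet t ∩ (Function.support (m k) ∩ ⋃ s ∈ G k, succSet s)) =
        msetT (m k) (succSet t) :=
      msetT_congr_of_mem_support fun x hx =>
        ⟨fun h => h.1, fun h => ⟨h, hx, Set.mem_biUnion hk h⟩⟩
    rw [hsucc, dist_comm, Real.dist_eq]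
    exact Finset.single_le_sum (f := fun s => |msetT (m k) (succSet s) - ν s|)
      (fun _ _ => abs_nonneg _) hk
  exact tendsto_const_nhds.congr_dist (squeeze_zero' (.of_forall fun _ => dist_nonneg) hdist hclose)

lemma eventually_msetT_succSet_inter_support_diff_iUnion_succSet
    (hGexh : ∀ x, ∀ᶠ k in atTop, x ∈ G k) (t : α) :
    ∀ᶠ k in atTop,
      msetT (m k) (succSet t ∩ (Function.support (m k) \ ⋃ s ∈ G k, succSet s)) = 0 := by
  filter_upwards [hGexh t] with k hk
  have hempty : succSet t ∩ (Function.support (m k) \ ⋃ s ∈ G k, succSet s) = ∅ :=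
    Set.eq_empty_of_forall_notMem fun x hx => hx.2.2 (Set.mem_biUnion hk hx.1)
  rw [hempty, msetT_empty]

lemma exists_strictMono_vanishing_with_close_succ_masses {μs : ℕ → α → ℝ}
    (hdisj : ∀ i j, i ≠ j → Disjoint (Function.support (μs i)) (Function.support (μs j)))
    (hν : ∀ t : α, Tendsto (fun i => msetT (μs i) (succSet t)) atTop (𝓝 (ν t)))
    (G : ℕ → Finset α) :
    ∃ f : ℕ → ℕ, StrictMono f ∧ (∀ k, ∀ s ∈ G k, μs (f k) s = 0) ∧
      Tendsto (fun k => ∑ s ∈ G k, |msetT (μs (f k)) (succSet s) - ν s|) atTop (𝓝 0) := by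
  have hclose (k : ℕ) :
      Tendsto (fun i => ∑ s ∈ G k, |msetT (μs i) (succSet s) - ν s|) atTop (𝓝 0) := by
    simpa using tendsto_finsetSum (G k) fun s _ => ((hν s).sub_const (ν s)).abs
  have hP (k : ℕ) : ∀ᶠ i in atTop, (∀ s ∈ G k, μs i s = 0) ∧
      ∑ s ∈ G k, |msetT (μs i) (succSet s) - ν s| ≤ 1 / ((k : ℝ) + 1) :=
    ((eventually_all_finset _).2 fun s _ => eventually_eq_zero_of_disjoint_support hdisj s).and
      ((hclose k).eventually_le_const (by positivity))
  obtain ⟨f, hf, hfP⟩ := extraction_forall_of_eventually hP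
  exact ⟨f, hf, fun k => (hfP k).1,
    squeeze_zero (fun _ => Finset.sum_nonneg fun _ _ => abs_nonneg _) (fun k => (hfP k).2)
      tendsto_one_div_add_atTop_nhds_zero_nat⟩

end Sequences

lemma exists_monotone_finset_eventually_mem (α : Type*) [Countable α] :
    ∃ G : ℕ → Finset α, Monotone G ∧ ∀ x, ∀ᶠ k in atTop, x ∈ G k := by
  let := Encodable.ofCountable α
  refine ⟨fun k => (Finset.range k).preimage Encodable.encode Encodable.encode_injective.injOn,
    fun a b hab x hx => ?_, fun x => ?_⟩
  · simp only [Finset.mem_preimage, Finset.mem_range] at hx ⊢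
    omega
  · filter_upwards [eventually_gt_atTop (Encodable.encode x)] with k hk
    simpa using hk

lemma StrictMono.map_atTop_eq_inf_principal_range {f : ℕ → ℕ} (hf : StrictMono f) :
    map f atTop = atTop ⊓ 𝓟 (Set.range f) := by
  rw [← map_comap, comap_embedding_atTop (fun _ _ => hf.le_iff_le) fun c => ⟨c, hf.id_le c⟩]

theorem statement7_general {α : Type*} [PartialOrder α] [Countable α]
    (hchain : ∀ t : α, ∀ a, a < t → ∀ b, b < t → a ≤ b ∨ b ≤ a)
    (μs : ℕ → α → ℝ)
    (hsum : ∀ i, Summable (μs i))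
    (hdisj : ∀ i j, i ≠ j →
      Disjoint (Function.support (μs i)) (Function.support (μs j)))
    (ν : α → ℝ) (hνsum : Summable ν)
    (hν : ∀ t : α, Tendsto (fun i => msetT (μs i) (succSet t)) atTop (𝓝 (ν t))) :
    ∃ L : Set ℕ, L.Infinite ∧ ∃ A B : ℕ → Set α,
      (∀ i ∈ L, A i ∪ B i = Function.support (μs i) ∧ Disjoint (A i) (B i)) ∧
      (∀ t : α,
        Tendsto (fun i => msetT (μs i) (Set.Ici t ∩ A i)) (atTop ⊓ 𝓟 L)
          (𝓝 (msetT ν (Set.Ici t))) ∧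
        Tendsto (fun i => msetT (μs i) (succSet t ∩ A i)) (atTop ⊓ 𝓟 L)
          (𝓝 (ν t))) ∧
      (∀ t : α, ∀ᶠ i in atTop ⊓ 𝓟 L, msetT (μs i) (succSet t ∩ B i) = 0) := by
  classical
  obtain ⟨G, hGmono, hGexh⟩ := exists_monotone_finset_eventually_mem α
  obtain ⟨f, hf, hzero, hclose⟩ := exists_strictMono_vanishing_with_close_succ_masses hdisj hν G
  set U : ℕ → Set α := fun i => ⋃ s ∈ G (Function.invFun f i), succSet s
  have hU (k : ℕ) : U (f k) = ⋃ s ∈ G k, succSet s := by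
    simp only [U, Function.leftInverse_invFun hf.injective k]
  refine ⟨Set.range f, Set.infinite_range_of_injective hf.injective,
    fun i => Function.support (μs i) ∩ U i, fun i => Function.support (μs i) \ U i,
    fun i _ => ⟨Set.inter_union_sdiff _ _, Set.disjoint_sdiff_inter.symm⟩, fun t => ⟨?_, ?_⟩,
    fun t => ?_⟩ <;> rw [← hf.map_atTop_eq_inf_principal_range]
  · simpa only [tendsto_map'_iff, Function.comp_def, hU] using
      tendsto_msetT_Ici_inter_support_inter_iUnion_succSet hchain (fun k => hsum (f k)) hGmono
        hGexh hzero hclose hνsum t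
  · simpa only [tendsto_map'_iff, Function.comp_def, hU] using
      tendsto_msetT_succSet_inter_support_inter_iUnion_succSet hGexh hclose t
  · simpa only [eventually_map, hU] using
      eventually_msetT_succSet_inter_support_diff_iUnion_succSet hGexh t

/-- if a bounded, disjointly supported sequence `(μs i)` of positive measures
on a countable well-founded tree has successor-determined limit `ν`, then there are an
infinite set `L ⊆ ℕ` and partitions `supp (μs i) = A i ∪ B i`, `i ∈ L`, such that, writing
`μ¹ i (C) = μs i (C ∩ A i)` and `μ² i (C) = μs i (C ∩ B i)`:
(i) along `L`, `μ¹ i (V t) → ν (V t)` and `μ¹ i (succ t) → ν t` for every `t`; and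
(ii) for every `t`, `μ² i (succ t) = 0` for all but finitely many `i ∈ L`. -/
theorem statement7 {α : Type*} [PartialOrder α] [Countable α]
    (hfin : ∀ t : α, {s | s < t}.Finite)
    (hchain : ∀ t : α, ∀ a, a < t → ∀ b, b < t → a ≤ b ∨ b ≤ a)
    (hwf : ¬ ∃ c : ℕ → α, StrictMono c)
    (μs : ℕ → α → ℝ)
    (hnn : ∀ i t, 0 ≤ μs i t)
    (hsum : ∀ i, Summable (μs i))
    (hbdd : ∃ C : ℝ, ∀ i, msetT (μs i) Set.univ ≤ C)
    (hdisj : ∀ i j, i ≠ j →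
      Disjoint (Function.support (μs i)) (Function.support (μs j)))
    (ν : α → ℝ) (hνnn : ∀ t, 0 ≤ ν t) (hνsum : Summable ν)
    (hν : ∀ t : α, Tendsto (fun i => msetT (μs i) (succSet t)) atTop (𝓝 (ν t))) :
    ∃ L : Set ℕ, L.Infinite ∧ ∃ A B : ℕ → Set α,
      (∀ i ∈ L, A i ∪ B i = Function.support (μs i) ∧ Disjoint (A i) (B i)) ∧
      (∀ t : α,
        Tendsto (fun i => msetT (μs i) (Set.Ici t ∩ A i)) (atTop ⊓ 𝓟 L)
          (𝓝 (msetT ν (Set.Ici t))) ∧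
        Tendsto (fun i => msetT (μs i) (succSet t ∩ A i)) (atTop ⊓ 𝓟 L)
          (𝓝 (ν t))) ∧
      (∀ t : α, ∀ᶠ i in atTop ⊓ 𝓟 L, msetT (μs i) (succSet t ∩ B i) = 0) :=
  statement7_general hchain μs hsum hdisj ν hνsum hν
end

section
/- For every n ∈ ℕ and every ε > 0 there exists k ∈ ℕ such that for every maximal member F of the Schreier family S_n with k < min F, there exist positive reals (λ_i)_{i∈F} with Σ_{i∈F} λ_i = 1 such that Σ_{i∈Δ∩F} λ_i < ε for every m < n and every Δ ∈ S_m. (Equivalently, there exists an (n,ε)-special convex combination x = Σ_{i∈F} λ_i e_i with supp x = F.) -/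
/-- The Schreier families `S_n` of finite subsets of ℕ: `S_0` consists of the sets with at
most one element, and `S_{n+1}` consists of the unions `E_1 ∪ … ∪ E_k` of nonempty members
of `S_n` with `max E_i < min E_{i+1}` and `k ≤ min E_1` (together with `∅`, obtained
as the empty union). -/
def Schreier : ℕ → Set (Finset ℕ)
  | 0 => {F | F.card ≤ 1}
  | (n + 1) => {F | ∃ (k : ℕ) (E : Fin k → Finset ℕ),
      (∀ i, E i ∈ Schreier n) ∧
      (∀ i, (E i).Nonempty) ∧
      (∀ i j : Fin k, i < j → ∀ a ∈ E i, ∀ b ∈ E j, a < b) ∧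
      (∀ a ∈ F, k ≤ a) ∧
      F = Finset.univ.biUnion (fun i => E i)}

/-- `F` is a maximal member of `S_n`. -/
def SchreierMaximal (n : ℕ) (F : Finset ℕ) : Prop :=
  F ∈ Schreier n ∧ ∀ F' ∈ Schreier n, F ⊆ F' → F = F'

/-!
A maximal member `F` of `S_{n+1}` is the successive union of `p = min F` maximal members `E i`
of `S_n`: otherwise a point beyond `max F` could be added to `F`. This rests on the fact that a
non-maximal member of `S_n` can be extended by any point beyond its maximum, which propagates
block by block to the right. Maximality also gives `min E ≤ #E` for `E` maximal in `S_{n+1}`,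
so the minima of consecutive blocks at least double.

By induction each block carries a combination `μ i` giving mass at most `(2^n - 1) / min (E i)`
to the members of `S_m`, `m < n`. For the average `λ = p⁻¹ ∑ μ i` and `Δ ∈ S_m`, `m ≤ n`, the
first block meeting `Δ` contributes `μ`-mass at most `1`, and the `r`-th block after it at most
`(2^n - 1) / 2^r`, since `Δ` splits into at most `min Δ` members of `S_{m-1}`. Hence
`λ(Δ) ≤ (2^{n+1} - 1) / min F`, which is below `ε` once `min F > (2^n - 1) / ε`.
-/

open Finset

def Successive (E : ℕ → Finset ℕ) : Prop :=
  ∀ ⦃i j⦄, i < j → ∀ a ∈ E i, ∀ b ∈ E j, a < b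

namespace Successive

variable {E D : ℕ → Finset ℕ}

theorem mono (hD : Successive D) (h : ∀ i, E i ⊆ D i) : Successive E :=
  fun _ _ hij a ha b hb => hD hij a (h _ ha) b (h _ hb)

theorem pairwiseDisjoint (hE : Successive E) (s : Set ℕ) : s.PairwiseDisjoint E := by
  intro i _ j _ hij
  refine Finset.disjoint_left.2 fun a hai haj => ?_
  rcases hij.lt_or_gt with h | h
  · exact (hE h a hai a haj).false
  · exact (hE h a haj a hai).false

theorem update_insert (hE : Successive E) {i y : ℕ} (hlt : ∀ j < i, ∀ a ∈ E j, a < y)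
    (hgt : ∀ j, i < j → ∀ b ∈ E j, y < b) :
    Successive (Function.update E i (insert y (E i))) := by
  intro j j' hjj' a ha b hb
  rw [Function.update_apply] at ha hb
  split_ifs at ha hb with h h' h'
  · omega
  · subst h; rcases mem_insert.1 ha with rfl | ha
    · exact hgt j' hjj' b hb
    · exact hE hjj' a ha b hb
  · subst h'; rcases mem_insert.1 hb with rfl | hb
    · exact hlt j hjj' a ha
    · exact hE hjj' a ha b hb
  · exact hE hjj' a ha b hb

end Successive

/-- The blocks `E 0, …, E (k - 1)` of a member of `S_{n+1}`, indexed by `ℕ` and padded with `∅`.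
Unlike in `Schreier`, blocks may be empty. -/
structure SchreierBlocks (n k : ℕ) (E : ℕ → Finset ℕ) : Prop where
  mem : ∀ i, E i ∈ Schreier n
  successive : Successive E
  eq_empty : ∀ i, k ≤ i → E i = ∅

theorem SchreierBlocks.subset_biUnion {n k : ℕ} {E : ℕ → Finset ℕ} (hE : SchreierBlocks n k E)
    (i : ℕ) : E i ⊆ (range k).biUnion E := by
  intro a ha
  refine Finset.mem_biUnion.2 ⟨i, mem_range.2 ?_, ha⟩
  by_contra h
  simp [hE.eq_empty i (not_lt.1 h)] at ha

theorem SchreierBlocks.mono {n k k' : ℕ} {E : ℕ → Finset ℕ} (hE : SchreierBlocks n k E)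
    (hk : k ≤ k') : SchreierBlocks n k' E :=
  ⟨hE.mem, hE.successive, fun i hi => hE.eq_empty i (hk.trans hi)⟩

theorem empty_mem_schreier : ∀ n, (∅ : Finset ℕ) ∈ Schreier n
  | 0 => by simp [Schreier]
  | _ + 1 => ⟨0, fun i => i.elim0, fun i => i.elim0, fun i => i.elim0, fun i => i.elim0,
      by simp, by simp⟩

theorem mem_schreier_succ_iff {n : ℕ} {F : Finset ℕ} :
    F ∈ Schreier (n + 1) ↔
      ∃ k E, SchreierBlocks n k E ∧ (∀ a ∈ F, k ≤ a) ∧ F = (range k).biUnion E := by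
  constructor
  · rintro ⟨k, E, hES, -, hord, hk, rfl⟩
    refine ⟨k, fun i => if h : i < k then E ⟨i, h⟩ else ∅, ⟨fun i => ?_, ?_, fun i hi => ?_⟩,
      hk, ?_⟩
    · split_ifs
      exacts [hES _, empty_mem_schreier n]
    · intro i j hij a ha b hb
      dsimp only at ha hb
      split_ifs at ha hb
      · exact hord _ _ hij a ha b hb
      all_goals simp at ha hb
    · simp [hi.not_gt]
    · ext a
      simp only [mem_biUnion, mem_range, mem_univ, true_and]
      exact ⟨fun ⟨i, ha⟩ => ⟨i, i.2, by simpa using ha⟩,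
        fun ⟨i, hi, ha⟩ => ⟨⟨i, hi⟩, by simpa [hi] using ha⟩⟩
  · rintro ⟨k, E, ⟨hES, hE, -⟩, hk, rfl⟩
    classical
    set s := (range k).filter fun i => (E i).Nonempty
    let o := s.orderEmbOfFin rfl
    have ho : ∀ j, o j ∈ s := fun j => s.orderEmbOfFin_mem rfl j
    refine ⟨#s, fun j => E (o j), fun j => hES _, fun j => (mem_filter.1 (ho j)).2,
      fun i j hij => hE (o.strictMono hij), fun a ha => (card_filter_le _ _).trans ?_, ?_⟩
    · simpa using hk a ha
    · ext a
      simp only [mem_biUnion, mem_range, mem_univ, true_and]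
      constructor
      · rintro ⟨i, hi, ha⟩
        have : i ∈ Set.range o := by
          rw [range_orderEmbOfFin]; exact mem_filter.2 ⟨mem_range.2 hi, a, ha⟩
        obtain ⟨j, rfl⟩ := this
        exact ⟨j, ha⟩
      · rintro ⟨j, ha⟩
        exact ⟨o j, mem_range.1 (mem_filter.1 (ho j)).1, ha⟩

theorem pos_of_mem_schreier_succ {n : ℕ} {F : Finset ℕ} (hF : F ∈ Schreier (n + 1)) {a : ℕ}
    (ha : a ∈ F) : 0 < a := by
  obtain ⟨k, E, -, -, -, hk, rfl⟩ := hF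
  obtain ⟨i, -, -⟩ := Finset.mem_biUnion.1 ha
  exact i.pos.trans_le (hk a ha)

theorem singleton_mem_schreier {a : ℕ} (ha : 0 < a) : ∀ n, {a} ∈ Schreier n
  | 0 => by simp [Schreier]
  | n + 1 => ⟨1, fun _ => {a}, fun _ => singleton_mem_schreier ha n, fun _ => singleton_nonempty a,
      fun i j hij => absurd hij (by omega), by simp; omega, by simp⟩

theorem mem_schreier_of_subset {A B : Finset ℕ} (hBA : B ⊆ A) :
    ∀ {n}, A ∈ Schreier n → B ∈ Schreier n
  | 0, hA => (card_le_card hBA).trans hA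
  | n + 1, hA => by
    obtain ⟨k, E, hE, hkA, rfl⟩ := mem_schreier_succ_iff.1 hA
    refine mem_schreier_succ_iff.2 ⟨k, fun i => B ∩ E i,
      ⟨fun i => mem_schreier_of_subset inter_subset_right (hE.mem i),
        hE.successive.mono fun i => inter_subset_right, fun i hi => by simp [hE.eq_empty i hi]⟩,
      fun a ha => hkA a (hBA ha), ?_⟩
    rw [← inter_biUnion, inter_eq_left.2 hBA]

theorem SchreierMaximal.nonempty {n : ℕ} {F : Finset ℕ} (hF : SchreierMaximal n F) :
    F.Nonempty := by
  rw [nonempty_iff_ne_empty]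
  rintro rfl
  exact singleton_ne_empty 1 (hF.2 _ (singleton_mem_schreier one_pos n) (empty_subset _)).symm

theorem SchreierMaximal.insert_notMem {n : ℕ} {F : Finset ℕ} (hF : SchreierMaximal n F)
    {x : ℕ} (hx : x ∉ F) : insert x F ∉ Schreier n :=
  fun h => hx ((hF.2 _ h (subset_insert x F)).symm ▸ mem_insert_self x F)

def Extendable (n : ℕ) (A : Finset ℕ) : Prop :=
  ∀ x, 0 < x → (∀ a ∈ A, a < x) → insert x A ∈ Schreier n

theorem extendable_empty (n : ℕ) : Extendable n ∅ :=
  fun x hx _ => by simpa using singleton_mem_schreier hx n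

section Extension

variable {n k : ℕ} (hext : ∀ G H, H ∈ Schreier n → G ⊂ H → Extendable n G)
include hext

theorem SchreierBlocks.exists_shift {E : ℕ → Finset ℕ} (hE : SchreierBlocks n k E)
    (hpos : ∀ a ∈ (range k).biUnion E, 0 < a) {i : ℕ} (hi : i + 1 < k)
    (hEi : Extendable n (E i)) :
    ∃ E₁, SchreierBlocks n k E₁ ∧ Extendable n (E₁ (i + 1)) ∧
      (range k).biUnion E₁ = (range k).biUnion E := by
  obtain hempty | hne := (E (i + 1)).eq_empty_or_nonempty
  · exact ⟨E, hE, hempty ▸ extendable_empty n, rfl⟩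
  obtain ⟨y, hy, hymin⟩ : ∃ y ∈ E (i + 1), ∀ b ∈ E (i + 1), y ≤ b :=
    ⟨_, min'_mem _ hne, fun b hb => min'_le _ b hb⟩
  -- move the least element `y` of block `i + 1` into block `i`
  set E₀ := Function.update E (i + 1) ((E (i + 1)).erase y) with hE₀
  have hE₀i : E₀ i = E i := Function.update_of_ne (by omega) _ _
  have hE₀sub : ∀ j, E₀ j ⊆ E j := fun j => by
    rw [hE₀, Function.update_apply]; split_ifs with h
    exacts [h ▸ erase_subset y _, subset_rfl]
  set E₁ := Function.update E₀ i (insert y (E i)) with hE₁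
  refine ⟨E₁, ⟨fun j => ?_, ?_, fun j hj => ?_⟩, ?_, ?_⟩
  · rw [hE₁, Function.update_apply]; split_ifs with h
    · subst h
      exact hEi y (hpos y (hE.subset_biUnion _ hy)) fun a ha => hE.successive (by omega) a ha y hy
    · exact mem_schreier_of_subset (hE₀sub j) (hE.mem j)
  · have := (hE.successive.mono hE₀sub).update_insert (i := i) (y := y)
      (fun j hj a ha => hE.successive (by omega) a (hE₀sub j ha) y hy) fun j hj b hb => ?_
    · rwa [hE₀i] at this
    rcases eq_or_ne j (i + 1) with rfl | hj'
    · rw [hE₀, Function.update_self, mem_erase] at hb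
      exact lt_of_le_of_ne (hymin b hb.2) (Ne.symm hb.1)
    · exact hE.successive (by omega) y hy b (hE₀sub j hb)
  · rw [hE₁, Function.update_of_ne (by omega), hE₀, Function.update_of_ne (by omega),
      hE.eq_empty j hj]
  · rw [hE₁, Function.update_of_ne (by omega), hE₀, Function.update_self]
    exact hext _ _ (hE.mem _) (erase_ssubset hy)
  · ext a
    simp only [hE₁, hE₀, mem_biUnion, mem_range, Function.update_apply]
    grind

theorem SchreierBlocks.exists_insert {E : ℕ → Finset ℕ} (hE : SchreierBlocks n k E)
    (hpos : ∀ a ∈ (range k).biUnion E, 0 < a) {i : ℕ} (hi : i < k) (hEi : Extendable n (E i))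
    {x : ℕ} (hx0 : 0 < x) (hx : ∀ a ∈ (range k).biUnion E, a < x) :
    ∃ E', SchreierBlocks n k E' ∧ (range k).biUnion E' = insert x ((range k).biUnion E) := by
  obtain ⟨d, hd⟩ : ∃ d, k = i + 1 + d := ⟨k - i - 1, by omega⟩
  induction d generalizing i E with
  | zero =>
    subst hd
    refine ⟨Function.update E i (insert x (E i)), ⟨fun j => ?_, ?_, fun j hj => ?_⟩, ?_⟩
    · rw [Function.update_apply]; split_ifs with h
      · subst h; exact hEi x hx0 fun a ha => hx a (hE.subset_biUnion _ ha)
      · exact hE.mem j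
    · exact hE.successive.update_insert (fun j _ a ha => hx a (hE.subset_biUnion _ ha))
        fun j hj => by simp [hE.eq_empty j (by omega)]
    · rw [Function.update_of_ne (by omega)]; exact hE.eq_empty j hj
    · ext a
      simp only [mem_biUnion, mem_range, Function.update_apply, mem_insert]
      grind
  | succ d ih =>
    obtain ⟨E₁, hE₁, hE₁ext, hunion⟩ := hE.exists_shift hext hpos (by omega) hEi
    rw [← hunion] at hpos hx ⊢
    exact ih hE₁ hpos (by omega) hE₁ext hx (by omega)

end Extension

theorem extendable_of_ssubset : ∀ {n : ℕ} {G H : Finset ℕ}, H ∈ Schreier n → G ⊂ H →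
    Extendable n G
  | 0, G, H, hH, hGH, x, _, _ => by
    have : G = ∅ := card_eq_zero.1 (by have := card_lt_card hGH; simp [Schreier] at hH; omega)
    subst this
    simp [Schreier]
  | n + 1, G, H, hH, hGH, x, hx0, hxG => by
    obtain rfl | ⟨g, hg⟩ := G.eq_empty_or_nonempty
    · simpa using singleton_mem_schreier hx0 (n + 1)
    obtain ⟨k, D, hD, hkH, rfl⟩ := mem_schreier_succ_iff.1 hH
    obtain ⟨h, hhH, hhG⟩ := exists_of_ssubset hGH
    obtain ⟨i, hi, hhi⟩ := mem_biUnion.1 hhH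
    have hG : (range k).biUnion (fun j => G ∩ D j) = G := by
      rw [← inter_biUnion, inter_eq_left.2 hGH.subset]
    have hGD : SchreierBlocks n k fun j => G ∩ D j :=
      ⟨fun j => mem_schreier_of_subset inter_subset_right (hD.mem j),
        hD.successive.mono fun j => inter_subset_right, fun j hj => by simp [hD.eq_empty j hj]⟩
    have hext : Extendable n (G ∩ D i) := extendable_of_ssubset (hD.mem i)
      (ssubset_of_subset_of_ne inter_subset_right fun he => hhG (inter_subset_left (he ▸ hhi)))
    obtain ⟨E', hE', hunion⟩ := hGD.exists_insert (fun _ _ => extendable_of_ssubset)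
      (by rw [hG]; exact fun a ha => pos_of_mem_schreier_succ hH (hGH.subset ha))
      (mem_range.1 hi) hext hx0 (by rwa [hG])
    rw [hG] at hunion
    refine mem_schreier_succ_iff.2 ⟨k, E', hE', fun a ha => ?_, hunion.symm⟩
    rcases mem_insert.1 ha with rfl | ha
    · exact (hkH g (hGH.subset hg)).trans (hxG g hg).le
    · exact hkH a (hGH.subset ha)

theorem SchreierMaximal.exists_blocks {n : ℕ} {F : Finset ℕ} (hF : SchreierMaximal (n + 1) F) :
    ∃ p ∈ F, ∃ E, Successive E ∧ (∀ i < p, SchreierMaximal n (E i)) ∧ F = (range p).biUnion E := by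
  obtain ⟨a₀, ha₀⟩ := hF.nonempty
  obtain ⟨k, E, hE, hkF, rfl⟩ := mem_schreier_succ_iff.1 hF.1
  set x := ((range k).biUnion E).sup id + 1
  have hx0 : 0 < x := Nat.succ_pos _
  have hx : ∀ a ∈ (range k).biUnion E, a < x :=
    fun a ha => Nat.lt_succ_of_le (le_sup (f := id) ha)
  have hpos : ∀ a ∈ (range k).biUnion E, 0 < a := fun a ha => pos_of_mem_schreier_succ hF.1 ha
  have hins := hF.insert_notMem fun h => (hx x h).false
  have hext : ∀ G H, H ∈ Schreier n → G ⊂ H → Extendable n G := fun _ _ => extendable_of_ssubset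
  refine ⟨k, ?_, E, hE.successive, fun i hi => ⟨hE.mem i, fun G hG hsub => ?_⟩, rfl⟩
  · -- otherwise `{x}` could be appended as a further block
    by_contra hk
    have hU : (range (k + 1)).biUnion E = (range k).biUnion E := by
      rw [range_add_one, biUnion_insert, hE.eq_empty k le_rfl, empty_union]
    obtain ⟨E', hE', hunion⟩ := (hE.mono k.le_succ).exists_insert hext (hU ▸ hpos)
      k.lt_succ_self (hE.eq_empty k le_rfl ▸ extendable_empty n) hx0 (hU ▸ hx)
    rw [hU] at hunion
    refine hins (mem_schreier_succ_iff.2 ⟨k + 1, E', hE', fun a ha => ?_, hunion.symm⟩)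
    rcases mem_insert.1 ha with rfl | ha
    · exact (hkF a₀ ha₀).trans_lt (hx a₀ ha₀)
    · exact (hkF a ha).lt_of_ne (fun h => hk (h ▸ ha))
  · by_contra hne
    obtain ⟨E', hE', hunion⟩ := hE.exists_insert hext hpos hi
      (extendable_of_ssubset hG (ssubset_of_subset_of_ne hsub hne)) hx0 hx
    refine hins (mem_schreier_succ_iff.2 ⟨k, E', hE', fun a ha => ?_, hunion.symm⟩)
    rcases mem_insert.1 ha with rfl | ha
    exacts [(hkF a₀ ha₀).trans (hx a₀ ha₀).le, hkF a ha]

theorem SchreierMaximal.exists_le_card {n : ℕ} {F : Finset ℕ} (hF : SchreierMaximal (n + 1) F) :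
    ∃ a ∈ F, a ≤ #F := by
  obtain ⟨p, hp, E, hE, hmax, rfl⟩ := hF.exists_blocks
  refine ⟨p, hp, ?_⟩
  simpa using card_le_card_biUnion (hE.pairwiseDisjoint _)
    fun i hi => (hmax i (mem_range.1 hi)).nonempty

theorem two_mul_le_of_exists_le_card {A : Finset ℕ} {q b : ℕ} (hq : ∀ a ∈ A, q ≤ a)
    (hA : ∃ a ∈ A, a ≤ #A) (hb : ∀ a ∈ A, a < b) : 2 * q ≤ b := by
  obtain ⟨a, ha, hacard⟩ := hA
  have : #A ≤ b - q := by
    simpa using card_le_card fun a ha => mem_Ico.2 ⟨hq a ha, hb a ha⟩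
  have := hq a ha
  omega

theorem Successive.pow_mul_le {E : ℕ → Finset ℕ} (hE : Successive E) {P j q : ℕ}
    (hcard : ∀ i < P, ∃ a ∈ E i, a ≤ #(E i)) (hq : ∀ b ∈ E j, q ≤ b) :
    ∀ r, j + r < P → ∀ b ∈ E (j + r), 2 ^ r * q ≤ b
  | 0, _ => by simpa using hq
  | r + 1, hr => fun b hb => by
    rw [pow_succ, mul_comm _ 2, mul_assoc]
    exact two_mul_le_of_exists_le_card (hE.pow_mul_le hcard hq r (by omega)) (hcard _ (by omega))
      fun a ha => hE (by omega) a ha b hb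

/-- For `q = min F` this is an `(n, C / min F)`-special convex combination with support `F`, up to
the strictness of the bound; quantifying over all positive lower bounds `q` avoids `Finset.min'`. -/
structure IsSpecialCombination (n : ℕ) (C : ℝ) (F : Finset ℕ) (lam : ℕ → ℝ) : Prop where
  pos : ∀ i ∈ F, 0 < lam i
  sum_eq_one : ∑ i ∈ F, lam i = 1
  sum_inter_le : ∀ m < n, ∀ Δ ∈ Schreier m, ∀ q : ℕ, 0 < q → (∀ a ∈ F, q ≤ a) →
    ∑ i ∈ Δ ∩ F, lam i ≤ C / q

namespace IsSpecialCombination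

variable {n : ℕ} {C : ℝ} {F : Finset ℕ} {lam : ℕ → ℝ}

theorem sum_le_one (h : IsSpecialCombination n C F lam) {S : Finset ℕ} (hS : S ⊆ F) :
    ∑ i ∈ S, lam i ≤ 1 :=
  h.sum_eq_one ▸ sum_le_sum_of_subset_of_nonneg hS fun i hi _ => (h.pos i hi).le

theorem sum_inter_le_of_mem (h : IsSpecialCombination n C F lam) {m : ℕ} (hm : m < n)
    {Δ : Finset ℕ} (hΔ : Δ ∈ Schreier (m + 1)) {a : ℕ} (ha : a ∈ Δ) {q : ℕ} (hq : 0 < q)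
    (hqF : ∀ b ∈ F, q ≤ b) : ∑ i ∈ Δ ∩ F, lam i ≤ a * (C / q) := by
  have hCq : 0 ≤ C / q := by simpa using h.sum_inter_le m hm ∅ (empty_mem_schreier m) q hq hqF
  obtain ⟨k, D, hD, hkΔ, rfl⟩ := mem_schreier_succ_iff.1 hΔ
  rw [biUnion_inter,
    sum_biUnion ((hD.successive.mono fun j => inter_subset_left).pairwiseDisjoint _)]
  calc ∑ j ∈ range k, ∑ i ∈ D j ∩ F, lam i
      ≤ ∑ j ∈ range k, C / q := sum_le_sum fun j _ => h.sum_inter_le m hm _ (hD.mem j) q hq hqF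
    _ = k * (C / q) := by simp
    _ ≤ a * (C / q) := by gcongr; exact_mod_cast hkΔ a ha

end IsSpecialCombination

noncomputable def blockCombination (P : ℕ) (E : ℕ → Finset ℕ) (μ : ℕ → ℕ → ℝ) (a : ℕ) : ℝ :=
  (P : ℝ)⁻¹ * ∑ i ∈ range P, if a ∈ E i then μ i a else 0

theorem sum_blockCombination (P : ℕ) (E : ℕ → Finset ℕ) (μ : ℕ → ℕ → ℝ) (S : Finset ℕ) :
    ∑ a ∈ S, blockCombination P E μ a = (P : ℝ)⁻¹ * ∑ i ∈ range P, ∑ a ∈ S ∩ E i, μ i a := by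
  simp only [blockCombination, ← mul_sum]
  rw [sum_comm]
  simp_rw [sum_ite_mem]

theorem sum_range_le_one_add_two_mul {T : ℕ → ℝ} {c : ℝ} (hc : 0 ≤ c) {P i₁ : ℕ} (hi₁ : i₁ < P)
    (hlt : ∀ i < i₁, T i = 0) (hi₁le : T i₁ ≤ 1)
    (htail : ∀ r, i₁ + 1 + r < P → T (i₁ + 1 + r) ≤ c * (1 / 2) ^ r) :
    ∑ i ∈ range P, T i ≤ 1 + 2 * c := by
  obtain ⟨s, rfl⟩ : ∃ s, P = i₁ + 1 + s := ⟨P - i₁ - 1, by omega⟩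
  rw [sum_range_add, sum_range_succ, sum_eq_zero fun i hi => hlt i (mem_range.1 hi), zero_add]
  calc T i₁ + ∑ r ∈ range s, T (i₁ + 1 + r)
      ≤ 1 + ∑ r ∈ range s, c * (1 / 2) ^ r :=
        add_le_add hi₁le (sum_le_sum fun r hr => htail r (by simp at hr; omega))
    _ ≤ 1 + 2 * c := by
        rw [← mul_sum, mul_comm 2 c]
        gcongr
        exact sum_geometric_two_le s

section BlockEstimate

variable {n P : ℕ} {c : ℝ} {E : ℕ → Finset ℕ} {μ : ℕ → ℕ → ℝ} (hE : Successive E)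
  (hmax : ∀ i < P, SchreierMaximal n (E i)) (hμ : ∀ i < P, IsSpecialCombination n c (E i) (μ i))
  (hc : 0 ≤ c)
include hE hmax hμ hc

theorem sum_inter_tail_le {m : ℕ} (hm : m ≤ n) {Δ : Finset ℕ} (hΔ : Δ ∈ Schreier m) {i₁ a₀ : ℕ}
    (ha₀Δ : a₀ ∈ Δ) (ha₀ : a₀ ∈ E i₁) {r : ℕ} (hr : i₁ + 1 + r < P) :
    ∑ a ∈ Δ ∩ E (i₁ + 1 + r), μ (i₁ + 1 + r) a ≤ c * (1 / 2) ^ r := by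
  cases m with
  | zero =>
    -- `Δ ⊆ {a₀}`, and `a₀` lies in an earlier block
    rw [sum_eq_zero fun b hb => ?_]
    · positivity
    obtain ⟨hbΔ, hbE⟩ := mem_inter.1 hb
    obtain rfl : b = a₀ := card_le_one.1 hΔ b hbΔ a₀ ha₀Δ
    exact absurd (hE (by omega) b ha₀ b hbE) (lt_irrefl b)
  | succ m =>
    obtain ⟨n, rfl⟩ : ∃ n', n = n' + 1 := ⟨n - 1, by omega⟩
    have hlow := hE.pow_mul_le (fun i hi => (hmax i hi).exists_le_card)
      (fun b hb => hE (Nat.lt_succ_self i₁) a₀ ha₀ b hb) r hr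
    calc ∑ a ∈ Δ ∩ E (i₁ + 1 + r), μ (i₁ + 1 + r) a
        ≤ a₀ * (c / ↑(2 ^ r * (a₀ + 1))) :=
          (hμ _ hr).sum_inter_le_of_mem (by omega) hΔ ha₀Δ (by positivity) hlow
      _ = (a₀ / (a₀ + 1)) * (c * (1 / 2) ^ r) := by rw [one_div_pow]; push_cast; field_simp
      _ ≤ c * (1 / 2) ^ r :=
          mul_le_of_le_one_left (by positivity) (div_le_one_of_le₀ (by linarith) (by positivity))

theorem sum_sum_inter_le {m : ℕ} (hm : m ≤ n) {Δ : Finset ℕ} (hΔ : Δ ∈ Schreier m) :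
    ∑ i ∈ range P, ∑ a ∈ Δ ∩ E i, μ i a ≤ 1 + 2 * c := by
  classical
  by_cases h : ∃ i, i < P ∧ (Δ ∩ E i).Nonempty
  · -- `Nat.find h` is the first block meeting `Δ`
    obtain ⟨hi₁, a₀, ha₀⟩ := Nat.find_spec h
    refine sum_range_le_one_add_two_mul hc hi₁ (fun i hi => ?_) ((hμ _ hi₁).sum_le_one
      inter_subset_right) fun r hr => sum_inter_tail_le hE hmax hμ hc hm hΔ
        (mem_inter.1 ha₀).1 (mem_inter.1 ha₀).2 hr
    have := Nat.find_min h hi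
    rw [not_and, not_nonempty_iff_eq_empty] at this
    rw [this (hi.trans hi₁), sum_empty]
  · push Not at h
    rw [sum_eq_zero fun i hi => by rw [h i (mem_range.1 hi), sum_empty]]
    positivity

end BlockEstimate

theorem isSpecialCombination_blockCombination {n P : ℕ} {c : ℝ} {E : ℕ → Finset ℕ}
    {μ : ℕ → ℕ → ℝ} (hE : Successive E) (hmax : ∀ i < P, SchreierMaximal n (E i))
    (hμ : ∀ i < P, IsSpecialCombination n c (E i) (μ i)) (hc : 0 ≤ c)
    (hP : P ∈ (range P).biUnion E) :
    IsSpecialCombination (n + 1) (1 + 2 * c) ((range P).biUnion E) (blockCombination P E μ) := by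
  have hP0 : (0 : ℝ) < P := by
    obtain ⟨i, hi, -⟩ := Finset.mem_biUnion.1 hP
    exact_mod_cast Nat.zero_lt_of_lt (mem_range.1 hi)
  refine ⟨fun a ha => ?_, ?_, fun m hm Δ hΔ q hq hqF => ?_⟩
  · obtain ⟨i₀, hi₀, ha₀⟩ := Finset.mem_biUnion.1 ha
    refine mul_pos (inv_pos.2 hP0) (sum_pos' (fun i hi => ?_) ⟨i₀, hi₀, ?_⟩)
    · split_ifs with h
      exacts [((hμ i (mem_range.1 hi)).pos a h).le, le_rfl]
    · simpa [ha₀] using (hμ i₀ (mem_range.1 hi₀)).pos a ha₀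
  · rw [sum_blockCombination, sum_congr rfl fun i hi => by
      rw [inter_eq_right.2 (subset_biUnion_of_mem E hi), (hμ i (mem_range.1 hi)).sum_eq_one]]
    simp [hP0.ne']
  · rw [sum_blockCombination]
    calc (P : ℝ)⁻¹ * ∑ i ∈ range P, ∑ a ∈ Δ ∩ (range P).biUnion E ∩ E i, μ i a
        ≤ (P : ℝ)⁻¹ * (1 + 2 * c) := by
          gcongr
          exact sum_sum_inter_le hE hmax hμ hc (Nat.lt_succ_iff.1 hm)
            (mem_schreier_of_subset inter_subset_left hΔ)
      _ ≤ (1 + 2 * c) / q := by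
          rw [inv_mul_eq_div]
          gcongr
          exact_mod_cast hqF P hP

theorem exists_isSpecialCombination :
    ∀ {n : ℕ} {F : Finset ℕ}, SchreierMaximal n F → ∃ lam, IsSpecialCombination n (2 ^ n - 1) F lam
  | 0, F, hF => by
    obtain ⟨a, rfl⟩ := card_eq_one.1 (le_antisymm hF.1 (card_pos.2 hF.nonempty))
    exact ⟨fun _ => 1, by simp, by simp, fun m hm => absurd hm (Nat.not_lt_zero m)⟩
  | n + 1, F, hF => by
    obtain ⟨p, hp, E, hE, hmax, rfl⟩ := hF.exists_blocks
    choose! μ hμ using fun i (hi : i < p) => exists_isSpecialCombination (hmax i hi)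
    refine ⟨blockCombination p E μ, ?_⟩
    convert isSpecialCombination_blockCombination hE hmax hμ
      (sub_nonneg.2 (one_le_pow₀ one_le_two)) hp using 1
    ring

/-- for every `n` and `ε > 0` there is a `k` such that every maximal member
`F` of `S_n` with `k < min F` supports an `(n, ε)`-special convex combination: positive
weights `(λ_i)_{i∈F}` summing to `1` with `Σ_{i ∈ Δ ∩ F} λ_i < ε` for every `m < n` and
every `Δ ∈ S_m`. -/
theorem statement8 (n : ℕ) (ε : ℝ) (hε : 0 < ε) :
    ∃ k : ℕ, ∀ F : Finset ℕ, SchreierMaximal n F → (k : WithTop ℕ) < F.min →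
      ∃ lam : ℕ → ℝ,
        (∀ i ∈ F, 0 < lam i) ∧
        (∑ i ∈ F, lam i) = 1 ∧
        ∀ m : ℕ, m < n → ∀ Δ ∈ Schreier m, (∑ i ∈ Δ ∩ F, lam i) < ε := by
  obtain ⟨k, hk⟩ := exists_nat_gt ((2 ^ n - 1) / ε)
  refine ⟨k, fun F hF hkF => ?_⟩
  obtain ⟨lam, hlam⟩ := exists_isSpecialCombination hF
  refine ⟨lam, hlam.pos, hlam.sum_eq_one, fun m hm Δ hΔ => ?_⟩
  calc ∑ i ∈ Δ ∩ F, lam i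
      ≤ (2 ^ n - 1) / ↑(k + 1) := hlam.sum_inter_le m hm Δ hΔ (k + 1) k.succ_pos
        fun a ha => WithTop.coe_lt_coe.1 (hkF.trans_le (min_le ha))
    _ < ε := by
        rw [div_lt_iff₀ hε] at hk
        rw [div_lt_iff₀ (by positivity)]
        push_cast
        linarith
end

section
/- Let x ∈ c₀₀ with ‖x‖ ≤ 1, let ε > 0, and let {f_i}_{i∈I} be a finite family of members of G₁ with pairwise disjoint supports such that |f_i(x)| ≥ ε for every i ∈ I. Then #I ≤ ε^{−p}. -/
/-- The set `G₁`: functionals `Σ_{i∈S} ε_i e*_i` with `S` a segment and `ε_i ∈ {-1, 1}`. -/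
def G1 (T : TreeOrder) : Set (ℕ → ℝ) :=
  {f | ∃ S : Set ℕ, T.Segment S ∧ (∀ i ∈ S, f i = 1 ∨ f i = -1) ∧ ∀ i ∉ S, f i = 0}

/-- The set `G_{1,p}`: functionals `Σ_{k=1}^m b_k f_k` with `f_k ∈ G₁` having pairwise
disjoint supports and `Σ_k |b_k|^q ≤ 1` (`q` the conjugate exponent of `p`). -/
def G1p (T : TreeOrder) (q : ℝ) : Set (ℕ → ℝ) :=
  {f | ∃ (m : ℕ) (b : Fin m → ℝ) (g : Fin m → ℕ → ℝ),
    (∀ k, g k ∈ G1 T) ∧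
    (∀ k l : Fin m, k ≠ l →
      Disjoint (Function.support (g k)) (Function.support (g l))) ∧
    (∑ k, |b k| ^ q) ≤ 1 ∧
    f = fun n => ∑ k, b k * g k n}

/-- The action `f(x) = Σ_n f n * x n` of a functional on a vector. -/
noncomputable def evalF (f x : ℕ → ℝ) : ℝ := ∑' n, f n * x n

/-- The norm `‖x‖ = sup {f(x) : f ∈ G_{1,p}}` of the space `JT^ξ_{1,p}`. -/
noncomputable def jtNorm (T : TreeOrder) (q : ℝ) (x : ℕ → ℝ) : ℝ :=
  sSup {r : ℝ | ∃ f ∈ G1p T q, r = evalF f x}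


private theorem evalF_fin_sum (f x : ℕ → ℝ) (hxfin : (Function.support x).Finite) :
    evalF f x = ∑ n ∈ hxfin.toFinset, f n * x n := by
  apply tsum_eq_sum
  intro n hn
  have hx0 : x n = 0 := by
    simpa [Function.mem_support] using (by simpa using hn : n ∉ Function.support x)
  simp [hx0]

private theorem G1_abs_le_one {T : TreeOrder} {g : ℕ → ℝ} (hg : g ∈ G1 T) (n : ℕ) :
    |g n| ≤ 1 := by
  obtain ⟨S, _, hS1, hS0⟩ := hg
  by_cases hn : n ∈ S
  · rcases hS1 n hn with h | h <;> simp [h]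
  · simp [hS0 n hn]

private theorem G1p_abs_le_one {T : TreeOrder} {q : ℝ} (hq : 0 < q) {g : ℕ → ℝ}
    (hg : g ∈ G1p T q) (n : ℕ) : |g n| ≤ 1 := by
  obtain ⟨m, b, gs, hgs, hdisj, hsum, rfl⟩ := hg
  by_cases h : ∀ k, gs k n = 0
  · simp [h]
  · push_neg at h
    obtain ⟨k0, hk0⟩ := h
    have heq : (∑ k, b k * gs k n) = b k0 * gs k0 n := by
      apply Finset.sum_eq_single
      · intro k _ hk
        have hd := hdisj k k0 hk
        have hzero : gs k n = 0 := by
          by_contra hnz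
          exact hk0 (by
            have := Set.disjoint_left.mp hd (by simpa [Function.mem_support] using hnz)
            simpa [Function.mem_support] using this)
        simp [hzero]
      · intro hk; exact absurd (Finset.mem_univ k0) hk
    show |∑ k : Fin m, b k * gs k n| ≤ 1
    rw [heq, abs_mul]
    have habsb : |b k0| ≤ 1 := by
      by_contra hgt
      push_neg at hgt
      have h1 : (1:ℝ) < |b k0| ^ q :=
        Real.one_lt_rpow_iff_of_pos (lt_trans one_pos hgt) |>.mpr (Or.inl ⟨hgt, hq⟩)
      have h2 : |b k0| ^ q ≤ ∑ k, |b k| ^ q := by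
        apply Finset.single_le_sum (f := fun k => |b k| ^ q)
        · intro k _; positivity
        · exact Finset.mem_univ k0
      linarith
    calc |b k0| * |gs k0 n| ≤ 1 * 1 :=
          mul_le_mul habsb (G1_abs_le_one (hgs k0) n) (abs_nonneg _) zero_le_one
      _ = 1 := by ring

private theorem jtNorm_bddAbove (T : TreeOrder) (q : ℝ) (hq : 0 < q) (x : ℕ → ℝ)
    (hxfin : (Function.support x).Finite) :
    BddAbove {r : ℝ | ∃ f ∈ G1p T q, r = evalF f x} := by
  refine ⟨∑ n ∈ hxfin.toFinset, |x n|, ?_⟩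
  rintro r ⟨g, hg, rfl⟩
  rw [evalF_fin_sum g x hxfin]
  apply Finset.sum_le_sum
  intro n _
  calc g n * x n ≤ |g n * x n| := le_abs_self _
    _ = |g n| * |x n| := abs_mul _ _
    _ ≤ 1 * |x n| := by
        exact mul_le_mul_of_nonneg_right (G1p_abs_le_one hq hg n) (abs_nonneg _)
    _ = |x n| := one_mul _

/-- if `x ∈ c₀₀` with `‖x‖ ≤ 1`, `ε > 0`, and `f_1, …, f_N` is a finite
family of members of `G₁` with pairwise disjoint supports such that `|f_i(x)| ≥ ε` for
every `i`, then `N ≤ ε^{-p}`. -/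
theorem statement10 (T : TreeOrder) (hwf : T.IsWellFoundedTree)
    (p q : ℝ) (hp : 1 < p) (hpq : 1 / p + 1 / q = 1)
    (x : ℕ → ℝ) (hxfin : (Function.support x).Finite) (hx : jtNorm T q x ≤ 1)
    (ε : ℝ) (hε : 0 < ε)
    (N : ℕ) (f : Fin N → ℕ → ℝ)
    (hf : ∀ i, f i ∈ G1 T)
    (hdisj : ∀ i j : Fin N, i ≠ j →
      Disjoint (Function.support (f i)) (Function.support (f j)))
    (hbig : ∀ i, ε ≤ |evalF (f i) x|) :
    (N : ℝ) ≤ ε ^ (-p) := by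
  -- basic facts about q
  have hp0 : 0 < p := lt_trans one_pos hp
  have hinvp : 0 < 1 / p := by positivity
  have hinvp1 : 1 / p < 1 := by
    rw [div_lt_one hp0]; exact hp
  have hinvq : 0 < 1 / q := by linarith
  have hq : 0 < q := by
    by_contra h
    push_neg at h
    have : 1 / q ≤ 0 := one_div_nonpos.mpr h
    linarith
  rcases Nat.eq_zero_or_pos N with hN | hN
  · subst hN
    simp only [Nat.cast_zero]
    positivity
  · have hNpos : (0:ℝ) < N := by exact_mod_cast hN
    set S : ℝ := (N : ℝ) ^ (-(1/q)) with hS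
    have hSpos : 0 < S := Real.rpow_pos_of_pos hNpos _
    set σ : Fin N → ℝ := fun i => if 0 ≤ evalF (f i) x then 1 else -1 with hσ
    have hσabs : ∀ i, |σ i| = 1 := by
      intro i; simp only [hσ]; split <;> simp
    have hσmul : ∀ i, σ i * evalF (f i) x = |evalF (f i) x| := by
      intro i
      simp only [hσ]
      split
      · rw [one_mul, abs_of_nonneg (by assumption)]
      · rw [neg_one_mul, abs_of_neg (by linarith [lt_of_not_ge (by assumption)])]
    set b : Fin N → ℝ := fun i => σ i * S with hb
    have hbabs : ∀ i, |b i| = S := by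
      intro i
      rw [hb]
      simp only
      rw [abs_mul, hσabs i, one_mul, abs_of_pos hSpos]
    -- the candidate functional
    set g : ℕ → ℝ := fun n => ∑ i, b i * f i n with hg
    have hsumq : (∑ i : Fin N, |b i| ^ q) ≤ 1 := by
      have : ∀ i : Fin N, |b i| ^ q = (N : ℝ)⁻¹ := by
        intro i
        rw [hbabs i, hS, ← Real.rpow_mul hNpos.le, neg_mul, one_div,
          inv_mul_cancel₀ hq.ne', Real.rpow_neg_one]
      rw [Finset.sum_congr rfl (fun i _ => this i)]
      simp only [Finset.sum_const, Finset.card_univ, Fintype.card_fin, nsmul_eq_mul]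
      rw [mul_inv_cancel₀ hNpos.ne']
    have hgmem : g ∈ G1p T q := ⟨N, b, f, hf, hdisj, hsumq, rfl⟩
    -- evaluate g on x
    have heval : evalF g x = ∑ i, b i * evalF (f i) x := by
      rw [evalF_fin_sum g x hxfin]
      have : ∀ i : Fin N, evalF (f i) x = ∑ n ∈ hxfin.toFinset, f i n * x n :=
        fun i => evalF_fin_sum (f i) x hxfin
      simp_rw [this, hg, Finset.mul_sum, Finset.sum_mul]
      rw [Finset.sum_comm]
      congr 1; ext i; congr 1; ext n; ring
    have hlower : S * ((N:ℝ) * ε) ≤ evalF g x := by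
      rw [heval]
      have : ∀ i : Fin N, b i * evalF (f i) x = S * |evalF (f i) x| := by
        intro i
        rw [hb]
        simp only
        rw [mul_comm (σ i) S, mul_assoc, hσmul i]
      rw [Finset.sum_congr rfl (fun i _ => this i), ← Finset.mul_sum]
      apply mul_le_mul_of_nonneg_left _ hSpos.le
      calc (N:ℝ) * ε = ∑ _i : Fin N, ε := by
            simp [Finset.sum_const, mul_comm]
        _ ≤ ∑ i, |evalF (f i) x| := Finset.sum_le_sum fun i _ => hbig i
    have hupper : evalF g x ≤ 1 := by
      refine le_trans ?_ hx
      exact le_trans (le_csSup (jtNorm_bddAbove T q hq x hxfin) ⟨g, hgmem, rfl⟩) le_rfl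
    -- S * N = N ^ (1/p)
    have hSN : S * (N:ℝ) = (N:ℝ) ^ (1/p) := by
      rw [hS]
      nth_rewrite 2 [show (N:ℝ) = (N:ℝ) ^ (1:ℝ) by rw [Real.rpow_one]]
      rw [← Real.rpow_add hNpos]
      congr 1
      linarith
    have hkey : (N:ℝ) ^ (1/p) * ε ≤ 1 := by
      rw [← hSN, mul_assoc]
      exact le_trans hlower hupper
    have hkey2 : (N:ℝ) ^ (1/p) ≤ ε⁻¹ := by
      rw [le_inv_comm₀ (by positivity) hε] <;> try skip
      · calc ε = ((N:ℝ) ^ (1/p))⁻¹ * ((N:ℝ) ^ (1/p) * ε) := by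
              rw [← mul_assoc, inv_mul_cancel₀ (by positivity), one_mul]
          _ ≤ ((N:ℝ) ^ (1/p))⁻¹ * 1 := by
              exact mul_le_mul_of_nonneg_left hkey (by positivity)
          _ = ((N:ℝ) ^ (1/p))⁻¹ := mul_one _
    have := Real.rpow_le_rpow (by positivity) hkey2 hp0.le
    rw [← Real.rpow_mul (Nat.cast_nonneg N), one_div_mul_cancel hp0.ne',
      Real.rpow_one] at this
    calc (N:ℝ) ≤ (ε⁻¹) ^ p := this
      _ = ε ^ (-p) := by
          rw [Real.rpow_neg hε.le, ← Real.inv_rpow hε.le]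
end

section
/- Let S = {j_1, …, j_n} be a finite segment of ⪯ (so j_1 ≺ j_2 ≺ … ≺ j_n). Then for all real scalars a_1, …, a_n one has ‖Σ_{i=1}^n a_i e_{j_i}‖ = Σ_{i=1}^n |a_i|; that is, the vectors e_{j_1}, …, e_{j_n} are isometrically equivalent to the unit vector basis of ℓ₁^n. -/
/-- Auxiliary extremal functional. -/
noncomputable def extremalF {n : ℕ} (js : Fin n → ℕ) (a : Fin n → ℝ) : ℕ → ℝ := fun m =>
  if h : m ∈ Set.range js then (if 0 ≤ a h.choose then 1 else -1) else 0

/-- if `S = {j 1, …, j n}` is a finite segment of the tree order (with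
`j 1 ≺ j 2 ≺ … ≺ j n`), then `‖Σ_i a i • e_{j i}‖ = Σ_i |a i|` for all scalars; i.e.
`e_{j 1}, …, e_{j n}` are isometrically equivalent to the unit vector basis of `ℓ₁ⁿ`. -/
theorem statement14 (T : TreeOrder) (hwf : T.IsWellFoundedTree)
    (p q : ℝ) (hp : 1 < p) (hpq : 1 / p + 1 / q = 1)
    (n : ℕ) (js : Fin n → ℕ)
    (hmono : ∀ i k : Fin n, i < k → T.le (js i) (js k) ∧ js i ≠ js k)
    (hseg : T.Segment (Set.range js))
    (a : Fin n → ℝ) :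
    jtNorm T q (fun m => ∑ i, a i * (if m = js i then 1 else 0)) = ∑ i, |a i| := by
  classical
  have hp0 : (0:ℝ) < p := lt_trans one_pos hp
  have h1p : 1/p < 1 := by rw [div_lt_one hp0]; exact hp
  have h1q : 0 < 1/q := by linarith
  have hq0 : 0 < q := one_div_pos.mp h1q
  have hinj : Function.Injective js := by
    intro i k h
    by_contra hne
    rcases lt_or_gt_of_ne hne with hlt | hlt
    · exact (hmono i k hlt).2 h
    · exact (hmono k i hlt).2 h.symm
  set x : ℕ → ℝ := fun m => ∑ i, a i * (if m = js i then 1 else 0) with hxdef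
  have hx0 : ∀ m, m ∉ Set.range js → x m = 0 := by
    intro m hm
    apply Finset.sum_eq_zero
    intro i _
    have : m ≠ js i := fun h => hm ⟨i, h.symm⟩
    simp [this]
  have hxj : ∀ i, x (js i) = a i := by
    intro i
    show (∑ k, a k * if js i = js k then 1 else 0) = a i
    rw [Finset.sum_eq_single i (fun k _ hk => by
      have : js i ≠ js k := fun h => hk (hinj h).symm
      simp [this]) (by simp)]
    simp
  have hev : ∀ f : ℕ → ℝ, evalF f x = ∑ i, f (js i) * a i := by
    intro f
    unfold evalF
    rw [tsum_eq_sum (s := Finset.image js Finset.univ) (by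
      intro m hm
      have hm' : m ∉ Set.range js := by
        intro ⟨i, hi⟩
        exact hm (Finset.mem_image.mpr ⟨i, Finset.mem_univ i, hi⟩)
      rw [hx0 m hm', mul_zero])]
    rw [Finset.sum_image (fun i _ k _ h => hinj h)]
    exact Finset.sum_congr rfl (fun i _ => by rw [hxj i])
  have hub : ∀ f ∈ G1p T q, evalF f x ≤ ∑ i, |a i| := by
    rintro f ⟨m, b, g, hg, hdisj, hb, rfl⟩
    have hf1 : ∀ nn : ℕ, |∑ k, b k * g k nn| ≤ 1 := by
      intro nn
      by_cases h : ∀ k, g k nn = 0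
      · simp [h]
      · push_neg at h
        obtain ⟨k0, hk0⟩ := h
        have hz : ∀ k, k ≠ k0 → g k nn = 0 := by
          intro k hk
          by_contra hgk
          exact Set.disjoint_left.mp (hdisj k k0 hk)
            (Function.mem_support.mpr hgk) (Function.mem_support.mpr hk0)
        rw [Finset.sum_eq_single k0 (fun k _ hk => by rw [hz k hk, mul_zero])
          (fun h => absurd (Finset.mem_univ k0) h), abs_mul]
        have hbk1 : |b k0| ^ q ≤ 1 := by
          refine le_trans ?_ hb
          exact Finset.single_le_sum (f := fun k => |b k| ^ q)
            (fun k _ => Real.rpow_nonneg (abs_nonneg _) q) (Finset.mem_univ k0)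
        have hbk : |b k0| ≤ 1 := by
          by_contra hgt
          push_neg at hgt
          have : (1:ℝ) ^ q < |b k0| ^ q := Real.rpow_lt_rpow zero_le_one hgt hq0
          rw [Real.one_rpow] at this
          linarith
        have hgv : |g k0 nn| ≤ 1 := by
          obtain ⟨S, hS, hval, hout⟩ := hg k0
          by_cases hmem : nn ∈ S
          · rcases hval nn hmem with h | h <;> simp [h]
          · simp [hout nn hmem]
        have := mul_le_mul hbk hgv (abs_nonneg _) zero_le_one
        linarith
    rw [hev]
    apply Finset.sum_le_sum
    intro i _
    have h2 : (∑ k, b k * g k (js i)) * a i ≤ |(∑ k, b k * g k (js i)) * a i| :=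
      le_abs_self _
    rw [abs_mul] at h2
    have h3 : |∑ k, b k * g k (js i)| * |a i| ≤ 1 * |a i| :=
      mul_le_mul_of_nonneg_right (hf1 (js i)) (abs_nonneg _)
    linarith
  -- the extremal functional
  set f0 := extremalF js a with hf0def
  have hf0G1 : f0 ∈ G1 T := by
    refine ⟨Set.range js, hseg, ?_, ?_⟩
    · intro i hi
      rw [hf0def]
      simp only [extremalF, hi, dif_pos]
      by_cases h : 0 ≤ a (hi.choose) <;> simp [h]
    · intro i hi
      rw [hf0def]
      simp [extremalF, hi]
  have hf0G1p : f0 ∈ G1p T q := by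
    refine ⟨1, fun _ => 1, fun _ => f0, fun _ => hf0G1, ?_, ?_, ?_⟩
    · intro k l hkl
      exact absurd (Subsingleton.elim k l) hkl
    · simp [Real.one_rpow]
    · funext nn; simp
  have hf0j : ∀ i, f0 (js i) = if 0 ≤ a i then 1 else -1 := by
    intro i
    have hi : js i ∈ Set.range js := ⟨i, rfl⟩
    rw [hf0def]
    simp only [extremalF, hi, dif_pos]
    have : hi.choose = i := hinj hi.choose_spec
    rw [this]
  have hf0ev : evalF f0 x = ∑ i, |a i| := by
    rw [hev]
    apply Finset.sum_congr rfl
    intro i _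
    rw [hf0j i]
    by_cases h : 0 ≤ a i
    · simp [h, abs_of_nonneg h]
    · push_neg at h
      simp [not_le.mpr h, abs_of_neg h]
  have hbdd : BddAbove {r : ℝ | ∃ f ∈ G1p T q, r = evalF f x} := by
    refine ⟨∑ i, |a i|, ?_⟩
    rintro r ⟨f, hf, rfl⟩
    exact hub f hf
  have hmem : (∑ i, |a i|) ∈ {r : ℝ | ∃ f ∈ G1p T q, r = evalF f x} :=
    ⟨f0, hf0G1p, hf0ev.symm⟩
  apply le_antisymm
  · apply Real.sSup_le
    · rintro r ⟨f, hf, rfl⟩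
      exact hub f hf
    · exact Finset.sum_nonneg (fun i _ => abs_nonneg _)
  · exact le_csSup hbdd hmem
end
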